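/- arXiv:math/9502215 — 12 statements merged into one kernel-verified Lean document; each statement's English description precedes it below -/
import Mathlib

section
/- Let (q_n)_{n∈ℕ} be a divided power sequence in K[x], let P be a bijective shift-invariant K-linear operator on K[x], set p_n := P q_n, and let F := P_y ∘ E^y : K[x] → K[x,y]. Then for every n, F p_n(x) = Σ_{k=0}^n p_k(x) p_{n-k}(y) in K[x,y]. -/
open Polynomial

noncomputable section

/-- The shift operator `E^c : K[x] → K[x]`, `p(x) ↦ p(x + c)`. -/
def shiftC {K : Type*} [CommRing K] (c : K) (p : Polynomial K) : Polynomial K :=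
  p.comp (X + C c)

/-- The shift operator `E^y : K[x] → K[x,y]`, `p(x) ↦ p(x + y)`.
Here `K[x,y]` is represented as `(K[x])[y]`, i.e. `Polynomial (Polynomial K)` with
inner variable `x` and outer variable `y`. -/
def shiftY {K : Type*} [CommRing K] (p : Polynomial K) : Polynomial (Polynomial K) :=
  Polynomial.aeval (C X + X : Polynomial (Polynomial K)) p

/-- For an operator `P` on univariate polynomials, `applyY P` is the `K[x]`-linear operator
`P_y` on `K[x,y] = (K[x])[y]` that applies `P` to the variable `y`. -/
def applyY {K : Type*} [CommRing K] (P : Polynomial K → Polynomial K)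
    (u : Polynomial (Polynomial K)) : Polynomial (Polynomial K) :=
  u.sum fun n a => C a * (P (X ^ n)).map C

namespace ShefferAux

variable {K : Type*} [CommRing K]

/-- `applyY` as a `K[x]`-linear map. -/
def applyYL (P : Polynomial K →ₗ[K] Polynomial K) :
    Polynomial (Polynomial K) →ₗ[Polynomial K] Polynomial (Polynomial K) :=
  Polynomial.lsum fun n =>
    { toFun := fun a => C a * (P (X ^ n)).map C
      map_add' := fun a b => by rw [map_add, add_mul]
      map_smul' := fun c a => by
        rw [smul_eq_mul, map_mul, RingHom.id_apply, Algebra.smul_def, algebraMap_eq,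
          mul_assoc] }

lemma applyY_eq (P : Polynomial K →ₗ[K] Polynomial K) (u : Polynomial (Polynomial K)) :
    applyY (⇑P) u = applyYL P u := rfl

/-- Applying `P` to the `x`-variable (i.e. to each coefficient), as a `K`-linear map. -/
def applyXL (P : Polynomial K →ₗ[K] Polynomial K) :
    Polynomial (Polynomial K) →ₗ[K] Polynomial (Polynomial K) :=
  Polynomial.lsum fun n =>
    { toFun := fun a => C (P a) * X ^ n
      map_add' := fun a b => by rw [map_add, map_add, add_mul]
      map_smul' := fun c a => by
        rw [map_smul, RingHom.id_apply, ← smul_C, smul_mul_assoc] }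

lemma applyXL_monomial (P : Polynomial K →ₗ[K] Polynomial K) (n : ℕ) (a : Polynomial K) :
    applyXL P (monomial n a) = C (P a) * X ^ n := by
  simp only [applyXL, Polynomial.lsum_apply]
  rw [Polynomial.sum_monomial_index _ _ (by simp)]
  rfl

lemma eval_C_shiftY (c : K) (f : Polynomial K) :
    Polynomial.eval (C c) (shiftY f) = shiftC c f := by
  induction f using Polynomial.induction_on' with
  | add p q hp hq => simp only [shiftY, map_add, eval_add, shiftC, add_comp] at *; rw [hp, hq]
  | monomial n a =>
      rw [← C_mul_X_pow_eq_monomial]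
      simp only [shiftY, map_mul, map_pow, aeval_C, aeval_X, map_add, eval_mul, eval_pow,
        eval_add, eval_C, eval_X, shiftC, mul_comp, pow_comp, C_comp, X_comp]
      simp [algebraMap_eq, add_comm]

lemma eval_C_applyXL (P : Polynomial K →ₗ[K] Polynomial K) (c : K)
    (u : Polynomial (Polynomial K)) :
    Polynomial.eval (C c) (applyXL P u) = P (Polynomial.eval (C c) u) := by
  induction u using Polynomial.induction_on' with
  | add p q hp hq => rw [map_add, eval_add, hp, hq, eval_add, map_add]
  | monomial n a =>
      rw [applyXL_monomial, eval_mul, eval_pow, eval_C, eval_X, eval_monomial, ← C_pow,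
        mul_comm a, ← smul_eq_C_mul, map_smul, smul_eq_C_mul, mul_comm]

lemma shiftY_comm {K : Type*} [Field K] [CharZero K]
    (P : Polynomial K →ₗ[K] Polynomial K)
    (hPshift : ∀ (c : K) (pl : Polynomial K), P (shiftC c pl) = shiftC c (P pl))
    (f : Polynomial K) :
    shiftY (P f) = applyXL P (shiftY f) := by
  have hroots : {x | IsRoot (shiftY (P f) - applyXL P (shiftY f)) x}.Infinite := by
    apply Set.Infinite.mono (s := Set.range (C : K → Polynomial K))
    · rintro _ ⟨c, rfl⟩
      simp only [Set.mem_setOf_eq, IsRoot, eval_sub, eval_C_shiftY, eval_C_applyXL,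
        hPshift, sub_self]
    · exact Set.infinite_range_of_injective C_injective
  have h0 := Polynomial.eq_zero_of_infinite_isRoot _ hroots
  exact sub_eq_zero.mp h0

lemma applyXL_C_mul_map (P : Polynomial K →ₗ[K] Polynomial K) (a : Polynomial K)
    (f : Polynomial K) :
    applyXL P (C a * f.map C) = C (P a) * f.map C := by
  induction f using Polynomial.induction_on' with
  | add p q hp hq => rw [Polynomial.map_add, mul_add, map_add, hp, hq, mul_add]
  | monomial n c =>
      rw [map_monomial, C_mul_monomial, applyXL_monomial, C_mul_X_pow_eq_monomial,
        C_mul_monomial]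
      congr 1
      rw [mul_comm, ← smul_eq_C_mul, map_smul, smul_eq_C_mul, mul_comm]

lemma applyYL_map_C (P : Polynomial K →ₗ[K] Polynomial K) (f : Polynomial K) :
    applyYL P (f.map C) = (P f).map C := by
  induction f using Polynomial.induction_on' with
  | add p q hp hq => rw [Polynomial.map_add, map_add, hp, hq, map_add, Polynomial.map_add]
  | monomial n c =>
      rw [map_monomial]
      have h1 : applyYL P (monomial n (C c)) = C (C c) * (P (X ^ n)).map C := by
        simp only [applyYL, Polynomial.lsum_apply]
        rw [Polynomial.sum_monomial_index _ _ (by simp)]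
        rfl
      rw [h1, ← C_mul_X_pow_eq_monomial (R := K)]
      conv_rhs => rw [← smul_eq_C_mul]
      rw [map_smul, smul_eq_C_mul, Polynomial.map_mul, map_C]

lemma applyYL_C_mul_map (P : Polynomial K →ₗ[K] Polynomial K) (a : Polynomial K)
    (f : Polynomial K) :
    applyYL P (C a * f.map C) = C a * (P f).map C := by
  have := map_smul (applyYL P) a (f.map C)
  rw [Polynomial.smul_eq_C_mul, Polynomial.smul_eq_C_mul] at this
  rw [this, applyYL_map_C]

end ShefferAux

/-- If `(q_n)` is a divided power sequence, `P` is a bijective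
shift-invariant linear operator on `K[x]`, `p_n := P q_n` and `F := P_y ∘ E^y`, then
`F p_n(x) = ∑_{k=0}^n p_k(x) p_{n-k}(y)`. -/
theorem sheffer_convolution_of_dividedPowers {K : Type*} [Field K] [CharZero K]
    (q : ℕ → Polynomial K) (hqdeg : ∀ n, (q n).degree = n)
    (hq : ∀ n, shiftY (q n) =
      ∑ k ∈ Finset.range (n + 1), C (q k) * (q (n - k)).map C)
    (P : Polynomial K →ₗ[K] Polynomial K)
    (hPbij : Function.Bijective P)
    (hPshift : ∀ (c : K) (pl : Polynomial K), P (shiftC c pl) = shiftC c (P pl))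
    (p : ℕ → Polynomial K) (hp : ∀ n, p n = P (q n))
    (F : Polynomial K → Polynomial (Polynomial K))
    (hF : ∀ pl : Polynomial K, F pl = applyY (⇑P) (shiftY pl)) :
    ∀ n, F (p n) = ∑ k ∈ Finset.range (n + 1), C (p k) * (p (n - k)).map C := by
  intro n
  rw [hF, hp, ShefferAux.applyY_eq, ShefferAux.shiftY_comm P hPshift, hq, map_sum, map_sum]
  refine Finset.sum_congr rfl fun k _ => ?_
  rw [ShefferAux.applyXL_C_mul_map, ShefferAux.applyYL_C_mul_map, hp, hp]

end
end

section
/- Let (p_n)_{n∈ℕ} be a sequence of polynomials in K[x] (deg p_n = n) and let F : K[x] → K[x,y] be a shift-invariant K-linear map satisfying F p_n(x) = Σ_{k=0}^n p_k(x) p_{n-k}(y) for all n. Then: (i) the operator P := ε_y ∘ F on K[x] is shift-invariant and bijective; (ii) the sequence q_n := P^{-1} p_n is a divided power sequence; and (iii) F = P_y ∘ E^y. -/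
open Polynomial

noncomputable section

/-- The `K[y]`-linear extension of an operator `θ` on `K[x]` to `K[x,y] = (K[x])[y]`:
it applies `θ` to each `K[x]`-coefficient, i.e. it acts on the variable `x`. -/
def extendX {K : Type*} [CommRing K] (θ : Polynomial K → Polynomial K)
    (u : Polynomial (Polynomial K)) : Polynomial (Polynomial K) :=
  u.sum fun n a => C (θ a) * X ^ n

set_option linter.unusedSectionVars false

section Helpers

variable {K : Type*} [Field K] [CharZero K]

lemma eval_map_evalRH (u : Polynomial (Polynomial K)) (a c : K) :
    (u.map (evalRingHom a)).eval c = (u.eval (C c)).eval a := by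
  rw [eval_map]
  have h1 : u.eval (C c) = eval₂ (RingHom.id _) (C c) u := rfl
  have h2 : (u.eval (C c)).eval a = evalRingHom a (u.eval (C c)) := rfl
  rw [h2, h1, hom_eval₂]
  simp

lemma ext_map {u v : Polynomial (Polynomial K)}
    (h : ∀ a : K, u.map (evalRingHom a) = v.map (evalRingHom a)) : u = v := by
  apply Polynomial.ext
  intro m
  apply Polynomial.funext
  intro a
  have := congrArg (fun w => Polynomial.coeff w m) (h a)
  simpa [coeff_map] using this

lemma ext_evalC {u v : Polynomial (Polynomial K)}
    (h : ∀ c : K, u.eval (C c) = v.eval (C c)) : u = v := by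
  apply ext_map
  intro a
  apply Polynomial.funext
  intro c
  rw [eval_map_evalRH, eval_map_evalRH, h]

lemma evalC_shiftY (pl : Polynomial K) (c : K) :
    (shiftY pl).eval (C c) = shiftC c pl := by
  have h1 : shiftY pl = eval₂ (algebraMap K _) (C X + X) pl := rfl
  have h2 : (shiftY pl).eval (C c) = evalRingHom (C c) (shiftY pl) := rfl
  rw [h2, h1, hom_eval₂]
  have h3 : (evalRingHom (C c : Polynomial K)).comp (algebraMap K (Polynomial (Polynomial K)))
      = (C : K →+* Polynomial K) := by
    ext a
    simp [Polynomial.algebraMap_apply]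
  rw [h3]
  simp only [map_add, coe_evalRingHom, eval_C, eval_X]
  rw [shiftC, Polynomial.comp, add_comm (X : Polynomial K) (C c)]

lemma mapEval_shiftY (pl : Polynomial K) (a : K) :
    (shiftY pl).map (evalRingHom a) = shiftC a pl := by
  have h1 : shiftY pl = eval₂ (algebraMap K _) (C X + X) pl := rfl
  have h2 : (shiftY pl).map (evalRingHom a) = mapRingHom (evalRingHom a) (shiftY pl) := rfl
  rw [h2, h1, hom_eval₂]
  have h3 : (mapRingHom (evalRingHom a)).comp (algebraMap K (Polynomial (Polynomial K)))
      = (C : K →+* Polynomial K) := by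
    ext b
    simp [Polynomial.algebraMap_apply]
  rw [h3]
  simp only [map_add, coe_mapRingHom, map_C, coe_evalRingHom, eval_X, map_X]
  rw [shiftC, Polynomial.comp, add_comm (X : Polynomial K) (C a)]

lemma coeff_extendX (θ : Polynomial K → Polynomial K) (h0 : θ 0 = 0)
    (u : Polynomial (Polynomial K)) (m : ℕ) :
    (extendX θ u).coeff m = θ (u.coeff m) := by
  rw [extendX, Polynomial.sum_def, finset_sum_coeff]
  simp only [coeff_C_mul, coeff_X_pow, mul_ite, mul_one, mul_zero]
  rw [Finset.sum_ite_eq u.support m (fun n => θ (u.coeff n))]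
  by_cases h : m ∈ u.support
  · simp [h]
  · simp [h, Polynomial.notMem_support_iff.mp h, h0]

lemma evalC_extendX (θ : Polynomial K →ₗ[K] Polynomial K)
    (u : Polynomial (Polynomial K)) (c : K) :
    (extendX (⇑θ) u).eval (C c) = θ (u.eval (C c)) := by
  rw [extendX, Polynomial.sum_def, eval_finset_sum]
  have hterm : ∀ n ∈ u.support,
      (C (θ (u.coeff n)) * X ^ n).eval (C c) = θ ((c ^ n) • u.coeff n) := by
    intro n _
    rw [eval_mul, eval_C, eval_pow, eval_X, map_smul, ← Polynomial.C_pow,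
      Polynomial.smul_eq_C_mul, mul_comm]
  rw [Finset.sum_congr rfl hterm, ← map_sum]
  congr 1
  rw [Polynomial.eval_eq_sum, Polynomial.sum_def]
  apply Finset.sum_congr rfl
  intro n _
  rw [← Polynomial.C_pow, Polynomial.smul_eq_C_mul, mul_comm]

lemma mapEval_applyY (θ : Polynomial K →ₗ[K] Polynomial K)
    (u : Polynomial (Polynomial K)) (a : K) :
    (applyY (⇑θ) u).map (evalRingHom a) = θ (u.map (evalRingHom a)) := by
  have hcomp : (evalRingHom a).comp (C : K →+* Polynomial K) = RingHom.id K := by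
    ext b; simp
  have key : ∀ w : Polynomial (Polynomial K),
      w.map (evalRingHom a) = w.sum fun n b => (b.eval a) • (X : Polynomial K) ^ n := by
    intro w
    conv_lhs => rw [← Polynomial.sum_C_mul_X_pow_eq w]
    rw [Polynomial.sum_def, Polynomial.sum_def, Polynomial.map_sum]
    apply Finset.sum_congr rfl
    intro n _
    rw [Polynomial.map_mul, Polynomial.map_pow, map_C, map_X, Polynomial.smul_eq_C_mul]
    rfl
  rw [applyY, Polynomial.sum_def, Polynomial.map_sum]
  have hterm : ∀ n ∈ u.support,
      ((C (u.coeff n) * (θ (X ^ n)).map C).map (evalRingHom a))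
        = θ (((u.coeff n).eval a) • X ^ n) := by
    intro n _
    rw [Polynomial.map_mul, map_C, Polynomial.map_map, hcomp, Polynomial.map_id, map_smul,
      Polynomial.smul_eq_C_mul]
    rfl
  rw [Finset.sum_congr rfl hterm, ← map_sum]
  congr 1
  rw [key u, Polynomial.sum_def]

lemma evalC_CmulMapC (a b : Polynomial K) (c : K) :
    ((C a * b.map C).eval (C c) : Polynomial K) = (b.eval c) • a := by
  rw [eval_mul, eval_C, eval_map]
  have : eval₂ (C : K →+* Polynomial K) (C c) b = b.comp (C c) := rfl
  rw [this, Polynomial.comp_C, Polynomial.smul_eq_C_mul, mul_comm]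

lemma mapEval_CmulMapC (r b : Polynomial K) (a : K) :
    ((C r * b.map C)).map (evalRingHom a) = (r.eval a) • b := by
  have hcomp : (evalRingHom a).comp (C : K →+* Polynomial K) = RingHom.id K := by
    ext x; simp
  rw [Polynomial.map_mul, map_C, Polynomial.map_map, hcomp, Polynomial.map_id,
    Polynomial.smul_eq_C_mul]
  rfl

lemma mapEval_smul (r : K) (w : Polynomial (Polynomial K)) (a : K) :
    (r • w).map (evalRingHom a) = r • (w.map (evalRingHom a)) := by
  have h1 : r • w = C (C r) * w := by
    rw [← Polynomial.smul_eq_C_mul, ← algebraMap_smul (Polynomial K) r w,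
      Polynomial.algebraMap_eq]
  rw [h1, Polynomial.map_mul, map_C, coe_evalRingHom, eval_C, ← Polynomial.smul_eq_C_mul]

lemma eval0_shiftC (c : K) (b : Polynomial K) : (shiftC c b).eval 0 = b.eval c := by
  rw [shiftC, eval_comp]
  simp

lemma indDeg (b : ℕ → Polynomial K) (hb : ∀ m, (b m).degree = (m : WithBot ℕ))
    (Q : Polynomial K → Prop) (h0 : Q 0)
    (hstep : ∀ (α : K), α ≠ 0 → ∀ (m : ℕ) (r : Polynomial K),
      r.degree < (m : WithBot ℕ) → Q r → Q (α • b m + r)) :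
    ∀ r, Q r := by
  have key : ∀ m : ℕ, ∀ r : Polynomial K, r.degree < (m : WithBot ℕ) → Q r := by
    intro m
    induction m with
    | zero =>
      intro r hr
      have hbot : r.degree = ⊥ := by
        apply Nat.WithBot.lt_zero_iff.mp
        simpa using hr
      have : r = 0 := Polynomial.degree_eq_bot.mp hbot
      rwa [this]
    | succ m ih =>
      intro r hr
      by_cases hr0 : r = 0
      · rwa [hr0]
      by_cases hlt : r.degree < (m : WithBot ℕ)
      · exact ih r hlt
      have hbm0 : b m ≠ 0 := fun h => by
        have := hb m; rw [h, Polynomial.degree_zero] at this; exact absurd this (by simp)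
      have hndeg : r.natDegree = m := by
        have h1 : r.natDegree < m + 1 := by
          have := hr
          rw [Polynomial.degree_eq_natDegree hr0] at this
          exact_mod_cast this
        have h2 : m ≤ r.natDegree := by
          by_contra hcon
          apply hlt
          rw [Polynomial.degree_eq_natDegree hr0]
          exact_mod_cast not_le.mp hcon
        omega
      have hdeg : r.degree = (m : WithBot ℕ) := by
        rw [Polynomial.degree_eq_natDegree hr0, hndeg]
      set α := r.leadingCoeff / (b m).leadingCoeff with hαdef
      have hαne : α ≠ 0 := div_ne_zero (Polynomial.leadingCoeff_ne_zero.mpr hr0)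
        (Polynomial.leadingCoeff_ne_zero.mpr hbm0)
      have hsm : α • b m = C α * b m := Polynomial.smul_eq_C_mul α
      have hdsm : (α • b m).degree = (m : WithBot ℕ) := by
        rw [hsm, Polynomial.degree_C_mul hαne, hb]
      have hlc : r.leadingCoeff = (α • b m).leadingCoeff := by
        rw [hsm, Polynomial.leadingCoeff_mul, Polynomial.leadingCoeff_C,
          div_mul_cancel₀ _ (Polynomial.leadingCoeff_ne_zero.mpr hbm0)]
      have hrsum : α • b m + (r - α • b m) = r := by ring
      by_cases h0' : r - α • b m = 0
      · have : r = α • b m + 0 := by rw [add_zero, ← sub_eq_zero.mp h0']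
        rw [this]
        exact hstep α hαne m 0 (by rw [Polynomial.degree_zero]; exact WithBot.bot_lt_coe m) h0
      · have hd' : (r - α • b m).degree < (m : WithBot ℕ) := by
          rw [← hdeg]
          exact Polynomial.degree_sub_lt (hdeg.trans hdsm.symm) hr0 hlc
        rw [← hrsum]
        exact hstep α hαne m _ hd' (ih _ hd')
  intro r
  exact key (r.natDegree + 1) r
    (lt_of_le_of_lt (Polynomial.degree_le_natDegree) (by exact_mod_cast Nat.lt_succ_self _))

end Helpers

/-- **Sheffer theorem, hard direction.**  If a shift-invariant linear map
`F : K[x] → K[x,y]` satisfies the convolution identity for a polynomial sequence `(p_n)`,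
then `P := ε_y ∘ F` is a bijective shift-invariant operator, `q_n := P⁻¹ p_n` is a divided
power sequence, and `F = P_y ∘ E^y`. -/
theorem sheffer_of_convolution {K : Type*} [Field K] [CharZero K]
    (p : ℕ → Polynomial K) (hpdeg : ∀ n, (p n).degree = n)
    (F : Polynomial K →ₗ[K] Polynomial (Polynomial K))
    (hFshift : ∀ (c : K) (pl : Polynomial K),
      F (shiftC c pl) = extendX (shiftC c) (F pl))
    (hF : ∀ n, F (p n) = ∑ k ∈ Finset.range (n + 1), C (p k) * (p (n - k)).map C)
    (P : Polynomial K → Polynomial K)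
    (hP : ∀ pl : Polynomial K, P pl = Polynomial.eval 0 (F pl)) :
    (Function.Bijective P ∧
      ∀ (c : K) (pl : Polynomial K), P (shiftC c pl) = shiftC c (P pl)) ∧
    (∀ q : ℕ → Polynomial K, (∀ n, P (q n) = p n) →
      (∀ n, (q n).degree = n) ∧
      ∀ n, shiftY (q n) = ∑ k ∈ Finset.range (n + 1), C (q k) * (q (n - k)).map C) ∧
    (∀ pl : Polynomial K, F pl = applyY P (shiftY pl)) := by
  classical
  have hPadd : ∀ u v, P (u + v) = P u + P v := by
    intro u v; simp [hP, map_add]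
  have hPsmul : ∀ (r : K) (u : Polynomial K), P (r • u) = r • P u := by
    intro r u; simp [hP, map_smul, Polynomial.eval_smul]
  set Pl : Polynomial K →ₗ[K] Polynomial K :=
    { toFun := P, map_add' := hPadd, map_smul' := hPsmul } with hPldef
  have hPl : ∀ u, Pl u = P u := fun _ => rfl
  have hP0 : P 0 = 0 := by
    have := map_zero Pl; rwa [hPl] at this
  -- shiftC as a linear map
  have hshl : ∀ c : K, ∃ θ : Polynomial K →ₗ[K] Polynomial K, ⇑θ = shiftC c := by
    intro c
    exact ⟨{ toFun := shiftC c,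
             map_add' := by intro u v; simp [shiftC, Polynomial.add_comp]
             map_smul' := by intro r u; simp [shiftC, Polynomial.smul_comp] }, rfl⟩
  have hshiftC0 : ∀ c : K, shiftC c (0 : Polynomial K) = 0 := by
    intro c; simp [shiftC]
  -- shift invariance of P
  have hPsh : ∀ (c : K) (pl : Polynomial K), P (shiftC c pl) = shiftC c (P pl) := by
    intro c pl
    obtain ⟨θ, hθ⟩ := hshl c
    have h2 := evalC_extendX θ (F pl) 0
    rw [hθ] at h2
    simp only [Polynomial.C_0] at h2
    rw [hP, hFshift, h2, hP]
  -- basic facts about p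
  have hpne : ∀ n, p n ≠ 0 := by
    intro n h
    have := hpdeg n; rw [h, Polynomial.degree_zero] at this; exact absurd this (by simp)
  have hc0 : (p 0).coeff 0 ≠ 0 := by
    intro h0
    apply hpne 0
    have h := Polynomial.eq_C_of_degree_le_zero (le_of_eq (by exact_mod_cast hpdeg 0))
    rw [h, h0, Polynomial.C_0]
  -- P on the basis
  have hPp : ∀ n, P (p n) = ∑ k ∈ Finset.range (n + 1), ((p (n - k)).coeff 0) • p k := by
    intro n
    rw [hP, hF, Polynomial.eval_finset_sum]
    apply Finset.sum_congr rfl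
    intro k _
    rw [eval_mul, eval_C]
    have hm : ((p (n - k)).map C).eval (0 : Polynomial K) = C ((p (n - k)).coeff 0) := by
      rw [← Polynomial.C_0, eval_map]
      have : eval₂ (C : K →+* Polynomial K) (C 0) (p (n - k)) = (p (n - k)).comp (C 0) := rfl
      rw [this, Polynomial.comp_C, Polynomial.coeff_zero_eq_eval_zero]
    rw [hm, Polynomial.smul_eq_C_mul, mul_comm]
  have hdegPp : ∀ n, (P (p n)).degree = (n : WithBot ℕ) := by
    intro n
    rw [hPp n, Finset.sum_range_succ, Nat.sub_self]
    have hlast : (((p 0).coeff 0) • p n).degree = (n : WithBot ℕ) := by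
      rw [Polynomial.smul_eq_C_mul, Polynomial.degree_C_mul hc0, hpdeg]
    have hrest : (∑ k ∈ Finset.range n, ((p (n - k)).coeff 0) • p k).degree
        < (n : WithBot ℕ) := by
      apply lt_of_le_of_lt (Polynomial.degree_sum_le _ _)
      refine (Finset.sup_lt_iff (WithBot.bot_lt_coe n)).mpr ?_
      intro k hk
      apply lt_of_le_of_lt (Polynomial.degree_smul_le _ _)
      rw [hpdeg]
      exact Nat.cast_lt.mpr (Finset.mem_range.mp hk)
    rw [Polynomial.degree_add_eq_right_of_degree_lt (by rw [hlast]; exact hrest), hlast]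
  -- P preserves degrees
  have hdegP : ∀ r, (P r).degree = r.degree := by
    apply indDeg p hpdeg
    · rw [hP0]
    · intro α hα m r hrdeg hQ
      have h1 : P (α • p m + r) = α • P (p m) + P r := by rw [hPadd, hPsmul]
      have hda : (α • P (p m)).degree = (m : WithBot ℕ) := by
        rw [Polynomial.smul_eq_C_mul, Polynomial.degree_C_mul hα, hdegPp]
      have hdb : (α • p m).degree = (m : WithBot ℕ) := by
        rw [Polynomial.smul_eq_C_mul, Polynomial.degree_C_mul hα, hpdeg]
      have e1 : (α • P (p m) + P r).degree = (m : WithBot ℕ) := by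
        rw [Polynomial.degree_add_eq_left_of_degree_lt (by rw [hda, hQ]; exact hrdeg), hda]
      have e2 : (α • p m + r).degree = (m : WithBot ℕ) := by
        rw [Polynomial.degree_add_eq_left_of_degree_lt (by rw [hdb]; exact hrdeg), hdb]
      rw [h1, e1, e2]
  have hPinj : Function.Injective P := by
    intro u v huv
    have hs : P (u - v) = P u - P v := by
      have := map_sub Pl u v; rwa [hPl, hPl, hPl] at this
    have h0 : P (u - v) = 0 := by rw [hs, huv, sub_self]
    have hd := hdegP (u - v)
    rw [h0, Polynomial.degree_zero] at hd
    exact sub_eq_zero.mp (Polynomial.degree_eq_bot.mp hd.symm)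
  have hPsurj : Function.Surjective P := by
    apply indDeg (fun m => P (p m)) hdegPp (fun r => ∃ u, P u = r) ⟨0, hP0⟩
    rintro α hα m r hrd ⟨u, hu⟩
    exact ⟨α • p m + u, by rw [hPadd, hPsmul, hu]⟩
  -- the operator φ = ε_x ∘ F equals P
  set φ : Polynomial K → Polynomial K := fun r => (F r).map (evalRingHom 0) with hφdef
  have hφadd : ∀ u v, φ (u + v) = φ u + φ v := by
    intro u v; simp [hφdef, map_add, Polynomial.map_add]
  have hφsmul : ∀ (r : K) (u : Polynomial K), φ (r • u) = r • φ u := by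
    intro r u
    simp only [hφdef, map_smul]
    rw [mapEval_smul]
  have hφp : ∀ n, φ (p n) = P (p n) := by
    intro n
    have h1 : φ (p n) = ∑ k ∈ Finset.range (n + 1), ((p k).eval 0) • p (n - k) := by
      simp only [hφdef, hF n]
      rw [Polynomial.map_sum]
      apply Finset.sum_congr rfl
      intro k _
      rw [mapEval_CmulMapC]
    rw [h1, hPp n, ← Finset.sum_range_reflect]
    apply Finset.sum_congr rfl
    intro k hk
    have hk' : k ≤ n := Nat.lt_succ_iff.mp (Finset.mem_range.mp hk)
    have : n + 1 - 1 - k = n - k := by omega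
    rw [this, Nat.sub_sub_self hk', Polynomial.coeff_zero_eq_eval_zero]
  have hφP : ∀ r, φ r = P r := by
    apply indDeg p hpdeg
    · rw [hP0]
      show (F 0).map (evalRingHom 0) = 0
      rw [map_zero, Polynomial.map_zero]
    · intro α hα m r hrd hQ
      rw [hφadd, hφsmul, hPadd, hPsmul, hφp, hQ]
  -- Part (iii)
  have hiii : ∀ pl : Polynomial K, F pl = applyY P (shiftY pl) := by
    intro pl
    apply ext_map
    intro a
    have h2 : (extendX (shiftC a) (F pl)).map (evalRingHom (0 : K))
        = (F pl).map (evalRingHom a) := by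
      apply Polynomial.ext
      intro m
      rw [Polynomial.coeff_map, Polynomial.coeff_map,
        coeff_extendX (shiftC a) (hshiftC0 a)]
      exact eval0_shiftC a ((F pl).coeff m)
    have hL : (F pl).map (evalRingHom a) = shiftC a (P pl) := by
      rw [← h2, ← hFshift]
      have : (F (shiftC a pl)).map (evalRingHom (0 : K)) = φ (shiftC a pl) := rfl
      rw [this, hφP, hPsh]
    have hR : (applyY P (shiftY pl)).map (evalRingHom a) = shiftC a (P pl) := by
      have h3 : applyY P = applyY (⇑Pl) := rfl
      rw [h3, mapEval_applyY Pl (shiftY pl) a, mapEval_shiftY, hPl, hPsh]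
    rw [hL, hR]
  -- injectivity of the extended operators
  have hinjE : Function.Injective (extendX P) := by
    intro u v h
    apply ext_evalC
    intro c
    apply hPinj
    have h1 := congrArg (fun w => Polynomial.eval (C c) w) h
    have h3 : extendX P = extendX (⇑Pl) := rfl
    simp only [h3] at h1
    rw [evalC_extendX, evalC_extendX] at h1
    exact h1
  have hinjA : Function.Injective (applyY P) := by
    intro u v h
    apply ext_map
    intro a
    apply hPinj
    have h1 := congrArg (fun w => Polynomial.map (evalRingHom a) w) h
    have h3 : applyY P = applyY (⇑Pl) := rfl
    simp only [h3] at h1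
    rw [mapEval_applyY, mapEval_applyY] at h1
    exact h1
  refine ⟨⟨⟨hPinj, hPsurj⟩, hPsh⟩, ?_, hiii⟩
  intro q hq
  constructor
  · intro n
    rw [← hdegP (q n), hq n, hpdeg n]
  intro n
  have lemA : extendX P (shiftY (q n)) = shiftY (p n) := by
    apply ext_evalC
    intro c
    have h3 : extendX P = extendX (⇑Pl) := rfl
    rw [h3, evalC_extendX, evalC_shiftY, evalC_shiftY, hPl, hPsh, hq]
  have hT : extendX P (∑ k ∈ Finset.range (n + 1), C (q k) * (q (n - k)).map C)
      = ∑ k ∈ Finset.range (n + 1), C (p k) * (q (n - k)).map C := by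
    apply ext_evalC
    intro c
    have h3 : extendX P = extendX (⇑Pl) := rfl
    rw [h3, evalC_extendX, Polynomial.eval_finset_sum, Polynomial.eval_finset_sum]
    simp only [evalC_CmulMapC]
    rw [map_sum]
    apply Finset.sum_congr rfl
    intro k _
    rw [map_smul, hPl, hq]
  have hAp : applyY P (∑ k ∈ Finset.range (n + 1), C (p k) * (q (n - k)).map C)
      = F (p n) := by
    apply ext_map
    intro a
    have h3 : applyY P = applyY (⇑Pl) := rfl
    rw [h3, mapEval_applyY, hF n, Polynomial.map_sum, Polynomial.map_sum]
    simp only [mapEval_CmulMapC]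
    rw [map_sum]
    apply Finset.sum_congr rfl
    intro k _
    rw [map_smul, hPl, hq]
  have h1 : applyY P (extendX P (shiftY (q n))) = F (p n) := by
    rw [lemA, ← hiii (p n)]
  have h2 : applyY P (extendX P
      (∑ k ∈ Finset.range (n + 1), C (q k) * (q (n - k)).map C)) = F (p n) := by
    rw [hT, hAp]
  exact hinjE (hinjA (h1.trans h2.symm))

end
end

section
/- Let ν < 0 be a real number and let p be a polynomial with real coefficients. Then for every real x, (1/√(−2πν)) ∫_{−∞}^{∞} e^{u²/(2ν)} p(x+u) du = Σ_{k=0}^{⌊deg p/2⌋} ((−ν/2)^k / k!) · p^{(2k)}(x), where p^{(m)} denotes the m-th derivative of p. (In operator form this says that for ν < 0 the operator e^{−νD²/2} is represented by convolution against the Gaussian density of variance −ν.) -/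
open Polynomial MeasureTheory

lemma integrable_pow_mul_gauss {b : ℝ} (hb : 0 < b) (n : ℕ) :
    Integrable fun x : ℝ => x ^ n * Real.exp (-b * x ^ 2) := by
  have h : (-1 : ℝ) < (n : ℝ) :=
    lt_of_lt_of_le (by norm_num) (Nat.cast_nonneg n)
  simpa [Real.rpow_natCast] using integrable_rpow_mul_exp_neg_mul_sq hb h

lemma gauss_moment_step {b : ℝ} (hb : 0 < b) (n : ℕ) :
    ∫ x : ℝ, x ^ (n + 2) * Real.exp (-b * x ^ 2) =
      ((n + 1 : ℝ) / (2 * b)) * ∫ x : ℝ, x ^ n * Real.exp (-b * x ^ 2) := by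
  have hb' : b ≠ 0 := ne_of_gt hb
  have hu : ∀ y : ℝ, HasDerivAt (fun x : ℝ => x ^ (n + 1))
      (((n : ℝ) + 1) * y ^ n) y := by
    intro y
    simpa using hasDerivAt_pow (n + 1) y
  have hv : ∀ y : ℝ, HasDerivAt (fun x : ℝ => -(1 / (2 * b)) * Real.exp (-b * x ^ 2))
      (y * Real.exp (-b * y ^ 2)) y := by
    intro y
    have h1 : HasDerivAt (fun x : ℝ => -b * x ^ 2) (-b * (2 * y)) y := by
      simpa using (hasDerivAt_pow 2 y).const_mul (-b)
    have h3 := (h1.exp).const_mul (-(1 / (2 * b)))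
    refine h3.congr_deriv ?_
    field_simp
  have key := integral_mul_deriv_eq_deriv_mul_of_integrable (fun y _ => hu y) (fun y _ => hv y)
    (by
      have := integrable_pow_mul_gauss hb (n + 2)
      apply this.congr ?_  -- or convert
      filter_upwards with y
      simp [Pi.mul_apply]
      ring)
    (by
      have := (integrable_pow_mul_gauss hb n).const_mul (((n : ℝ) + 1) * (-(1 / (2 * b))))
      apply this.congr
      filter_upwards with y
      simp [Pi.mul_apply]
      ring)
    (by
      have := (integrable_pow_mul_gauss hb (n + 1)).const_mul (-(1 / (2 * b)))
      apply this.congr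
      filter_upwards with y
      simp [Pi.mul_apply]
      ring)
  have l1 : ∫ x : ℝ, x ^ (n + 1) * (x * Real.exp (-b * x ^ 2)) =
      ∫ x : ℝ, x ^ (n + 2) * Real.exp (-b * x ^ 2) := by
    congr 1; funext y; ring
  have l2 : ∫ x : ℝ, ((n : ℝ) + 1) * x ^ n * (-(1 / (2 * b)) * Real.exp (-b * x ^ 2)) =
      (((n : ℝ) + 1) * (-(1 / (2 * b)))) * ∫ x : ℝ, x ^ n * Real.exp (-b * x ^ 2) := by
    rw [← MeasureTheory.integral_const_mul]
    congr 1; funext y; ring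
  rw [l1, l2] at key
  rw [key]
  ring

lemma gauss_moment_even {b : ℝ} (hb : 0 < b) (k : ℕ) :
    ∫ x : ℝ, x ^ (2 * k) * Real.exp (-b * x ^ 2) =
      Real.sqrt (Real.pi / b) * ((2 * k).factorial / (k.factorial : ℝ)) * (1 / (4 * b)) ^ k := by
  induction k with
  | zero => simpa using integral_gaussian b
  | succ k ih =>
    have h2 : 2 * (k + 1) = 2 * k + 2 := by ring
    rw [h2, gauss_moment_step hb (2 * k), ih]
    have hf : ((2 * k + 2).factorial : ℝ) =
        (2 * k + 2) * ((2 * k + 1) * ((2 * k).factorial : ℝ)) := by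
      rw [show 2 * k + 2 = (2 * k + 1) + 1 from rfl, Nat.factorial_succ, Nat.factorial_succ]
      push_cast; ring
    have hk : (k.factorial : ℝ) ≠ 0 := Nat.cast_ne_zero.mpr k.factorial_ne_zero
    have hk2 : ((k + 1).factorial : ℝ) = (k + 1) * k.factorial := by
      rw [Nat.factorial_succ]; push_cast; ring
    rw [hf, hk2]
    have hb' : b ≠ 0 := ne_of_gt hb
    push_cast
    rw [div_pow, div_pow]
    field_simp
    ring

lemma gauss_moment_odd (b : ℝ) (k : ℕ) :
    ∫ x : ℝ, x ^ (2 * k + 1) * Real.exp (-b * x ^ 2) = 0 := by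
  have hodd : Odd (2 * k + 1) := ⟨k, by ring⟩
  have h : (∫ x : ℝ, x ^ (2 * k + 1) * Real.exp (-b * x ^ 2)) =
      -∫ x : ℝ, x ^ (2 * k + 1) * Real.exp (-b * x ^ 2) := by
    calc (∫ x : ℝ, x ^ (2 * k + 1) * Real.exp (-b * x ^ 2))
        = ∫ x : ℝ, (-x) ^ (2 * k + 1) * Real.exp (-b * (-x) ^ 2) :=
          (integral_neg_eq_self (fun x : ℝ => x ^ (2 * k + 1) * Real.exp (-b * x ^ 2))
            volume).symm
      _ = ∫ x : ℝ, -(x ^ (2 * k + 1) * Real.exp (-b * x ^ 2)) := by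
          congr 1; funext y; rw [hodd.neg_pow, neg_sq]; ring
      _ = -∫ x : ℝ, x ^ (2 * k + 1) * Real.exp (-b * x ^ 2) := integral_neg _
  linarith

lemma sum_range_two_mul_of_odd_zero {f : ℕ → ℝ} (hf : ∀ k, f (2 * k + 1) = 0) (m : ℕ) :
    ∑ i ∈ Finset.range (2 * m), f i = ∑ k ∈ Finset.range m, f (2 * k) := by
  induction m with
  | zero => simp
  | succ m ih =>
    rw [show 2 * (m + 1) = (2 * m + 1) + 1 by ring, Finset.sum_range_succ,
      Finset.sum_range_succ, hf m, Finset.sum_range_succ, ih]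
    simp

/-- For `ν < 0`, the operator `e^{-ν D²/2}` is represented by convolution
against the Gaussian density of variance `-ν`: for every real polynomial `p` and real `x`,
`(1/√(-2πν)) ∫ e^{u²/(2ν)} p(x+u) du = ∑_k ((-ν/2)^k / k!) p^{(2k)}(x)`. -/
theorem gaussian_integral_eq_exp_heat_operator (ν : ℝ) (hν : ν < 0) (p : Polynomial ℝ)
    (x : ℝ) :
    (1 / Real.sqrt (-2 * Real.pi * ν)) *
        ∫ u : ℝ, Real.exp (u ^ 2 / (2 * ν)) * p.eval (x + u) =
      ∑ k ∈ Finset.range (p.natDegree / 2 + 1),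
        ((-ν / 2) ^ k / (Nat.factorial k : ℝ)) *
          ((Polynomial.derivative)^[2 * k] p).eval x := by
  have hν' : ν ≠ 0 := ne_of_lt hν
  set b : ℝ := -1 / (2 * ν) with hbdef
  have hb : 0 < b := by
    rw [hbdef]
    apply div_pos_of_neg_of_neg <;> linarith
  set n := p.natDegree with hn
  set q := Polynomial.taylor x p with hq
  -- expand p (x + u) as a polynomial in u
  have hexpand : ∀ u : ℝ, Real.exp (u ^ 2 / (2 * ν)) * p.eval (x + u) =
      ∑ i ∈ Finset.range (n + 1), q.coeff i * (u ^ i * Real.exp (-b * u ^ 2)) := by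
    intro u
    have hE : u ^ 2 / (2 * ν) = -b * u ^ 2 := by
      rw [hbdef]; field_simp
    have hP : p.eval (x + u) = ∑ i ∈ Finset.range (n + 1), q.coeff i * u ^ i := by
      have h1 : q.eval u = p.eval (x + u) := by
        rw [hq, Polynomial.taylor_eval, add_comm]
      have h2 : q.natDegree = n := by rw [hq, Polynomial.natDegree_taylor]
      rw [← h1, Polynomial.eval_eq_sum_range, h2]
    rw [hE, hP, Finset.mul_sum]
    refine Finset.sum_congr rfl fun i _ => ?_
    ring
  simp only [hexpand]
  rw [integral_finset_sum _ fun i _ =>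
    ((integrable_pow_mul_gauss hb i).const_mul (q.coeff i))]
  simp only [MeasureTheory.integral_const_mul]
  -- define the summand
  set f : ℕ → ℝ := fun i => q.coeff i * ∫ u : ℝ, u ^ i * Real.exp (-b * u ^ 2) with hfdef
  have hodd : ∀ k, f (2 * k + 1) = 0 := by
    intro k
    rw [hfdef]
    simp only []
    rw [gauss_moment_odd b k, mul_zero]
  have hsq : Real.sqrt (Real.pi / b) = Real.sqrt (-2 * Real.pi * ν) := by
    congr 1
    rw [hbdef]; field_simp
  have hsqpos : (0 : ℝ) < Real.sqrt (-2 * Real.pi * ν) := by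
    apply Real.sqrt_pos.mpr
    have := Real.pi_pos; nlinarith
  have heven : ∀ k, (1 / Real.sqrt (-2 * Real.pi * ν)) * f (2 * k) =
      ((-ν / 2) ^ k / (Nat.factorial k : ℝ)) *
        ((Polynomial.derivative)^[2 * k] p).eval x := by
    intro k
    have hcoeff : ((Polynomial.derivative)^[2 * k] p).eval x =
        ((2 * k).factorial : ℝ) * q.coeff (2 * k) := by
      rw [hq, Polynomial.taylor_coeff]
      have := congrFun (Polynomial.factorial_smul_hasseDeriv (R := ℝ) (2 * k)) p
      rw [← this]
      simp [Polynomial.eval_smul, nsmul_eq_mul]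
    have hquarter : (1 / (4 * b)) = -ν / 2 := by
      rw [hbdef]; field_simp; ring
    have hS : Real.sqrt (-2 * Real.pi * ν) ≠ 0 := ne_of_gt hsqpos
    apply mul_left_cancel₀ hS
    rw [show Real.sqrt (-2 * Real.pi * ν) *
        (1 / Real.sqrt (-2 * Real.pi * ν) * f (2 * k)) = f (2 * k) from by
      rw [one_div, ← mul_assoc, mul_inv_cancel₀ hS, one_mul]]
    rw [hfdef]
    simp only [gauss_moment_even hb k, hsq, hquarter, hcoeff]
    ring
  -- reindex the sum
  have hrange : ∑ i ∈ Finset.range (n + 1), (1 / Real.sqrt (-2 * Real.pi * ν)) * f i =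
      ∑ k ∈ Finset.range (n / 2 + 1), (1 / Real.sqrt (-2 * Real.pi * ν)) * f (2 * k) := by
    have hzero : ∀ k, (1 / Real.sqrt (-2 * Real.pi * ν)) * f (2 * k + 1) = 0 := by
      intro k; rw [hodd k, mul_zero]
    calc ∑ i ∈ Finset.range (n + 1), (1 / Real.sqrt (-2 * Real.pi * ν)) * f i
        = ∑ i ∈ Finset.range (2 * (n / 2 + 1)),
            (1 / Real.sqrt (-2 * Real.pi * ν)) * f i := by
          rcases Nat.even_or_odd n with ⟨t, ht⟩ | ⟨t, ht⟩
          · have hz : (1 / Real.sqrt (-2 * Real.pi * ν)) * f (n + 1) = 0 := by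
              rw [show n + 1 = 2 * t + 1 by omega]; exact hzero t
            rw [show 2 * (n / 2 + 1) = (n + 1) + 1 by omega,
              Finset.sum_range_succ _ (n + 1), hz, add_zero]
          · rw [show 2 * (n / 2 + 1) = n + 1 by omega]
      _ = ∑ k ∈ Finset.range (n / 2 + 1),
            (1 / Real.sqrt (-2 * Real.pi * ν)) * f (2 * k) :=
          sum_range_two_mul_of_odd_zero hzero _
  rw [Finset.mul_sum, hrange]
  exact Finset.sum_congr rfl fun k _ => heven k
end

section
/- For a real number ν and n ∈ ℕ define the Hermite polynomial of variance ν by H_n^ν(x) = Σ_{k=0}^{⌊n/2⌋} (−ν/2)^k x^{n−2k} / (k! (n−2k)!). Then for every ν < 0, every n ∈ ℕ, and all real x, y: (1/√(−2πν)) ∫_{−∞}^{∞} e^{u²/(2ν)} H_n^ν(x+y+u) du = Σ_{k=0}^n H_k^ν(x) H_{n−k}^ν(y). -/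
open Polynomial MeasureTheory Real Filter Topology

noncomputable section

/-- The Hermite polynomial of variance `ν`:
`H_n^ν(x) = ∑_{k=0}^{⌊n/2⌋} (-ν/2)^k x^(n-2k) / (k! (n-2k)!)`. -/
def hermiteVar (ν : ℝ) (n : ℕ) : Polynomial ℝ :=
  ∑ k ∈ Finset.range (n / 2 + 1),
    C ((-ν / 2) ^ k / ((Nat.factorial k : ℝ) * (Nat.factorial (n - 2 * k) : ℝ))) *
      X ^ (n - 2 * k)

lemma hermiteVar_zero (ν : ℝ) : hermiteVar ν 0 = C 1 := by
  simp [hermiteVar]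

lemma derivative_hermiteVar (ν : ℝ) (n : ℕ) :
    derivative (hermiteVar ν (n + 1)) = hermiteVar ν n := by
  unfold hermiteVar
  rw [derivative_sum]
  have key : ∀ k ∈ Finset.range (n / 2 + 1),
      derivative (C ((-ν / 2) ^ k / ((Nat.factorial k : ℝ) *
          (Nat.factorial (n + 1 - 2 * k) : ℝ))) * X ^ (n + 1 - 2 * k))
      = C ((-ν / 2) ^ k / ((Nat.factorial k : ℝ) * (Nat.factorial (n - 2 * k) : ℝ))) *
          X ^ (n - 2 * k) := by
    intro k hk
    rw [Finset.mem_range] at hk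
    have h2k : 2 * k ≤ n := by omega
    rw [derivative_C_mul, derivative_X_pow]
    have e1 : n + 1 - 2 * k = (n - 2 * k) + 1 := by omega
    rw [e1, Nat.add_sub_cancel, ← mul_assoc, ← C_mul]
    congr 2
    rw [Nat.factorial_succ]
    push_cast
    have h1 : (Nat.factorial k : ℝ) ≠ 0 := Nat.cast_ne_zero.2 (Nat.factorial_ne_zero k)
    have h2 : (Nat.factorial (n - 2 * k) : ℝ) ≠ 0 := Nat.cast_ne_zero.2 (Nat.factorial_ne_zero _)
    have h3 : ((n : ℝ) - 2 * k + 1) ≠ 0 := by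
      have h4 : ((2 * k : ℕ) : ℝ) ≤ (n : ℕ) := Nat.cast_le.2 h2k
      push_cast at h4 ⊢
      linarith
    field_simp
  rcases Nat.even_or_odd n with ⟨t, ht⟩ | ⟨t, ht⟩
  · have hr : (n + 1) / 2 = n / 2 := by omega
    rw [hr]
    exact Finset.sum_congr rfl key
  · have hr : (n + 1) / 2 = n / 2 + 1 := by omega
    rw [hr, Finset.sum_range_succ, Finset.sum_congr rfl key]
    have hz : n + 1 - 2 * (n / 2 + 1) = 0 := by omega
    rw [hz]
    simp

def gc (ν : ℝ) (n : ℕ) : ℝ :=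
  if Even n then (-ν / 2) ^ (n / 2) / (Nat.factorial (n / 2) : ℝ) else 0

lemma gc_zero (ν : ℝ) : gc ν 0 = 1 := by simp [gc]

lemma eval_zero_hermiteVar (ν : ℝ) (n : ℕ) :
    (hermiteVar ν n).eval 0 = gc ν n := by
  unfold hermiteVar gc
  rw [eval_finset_sum]
  rcases Nat.even_or_odd n with ⟨t, ht⟩ | ⟨t, ht⟩
  · rw [if_pos ⟨t, ht⟩]
    have hn2 : n / 2 = t := by omega
    rw [Finset.sum_eq_single t]
    · have : n - 2 * t = 0 := by omega
      simp [this, hn2]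
    · intro k hk hkt
      rw [Finset.mem_range, hn2] at hk
      have : n - 2 * k ≠ 0 := by omega
      simp [eval_mul, eval_pow, zero_pow this]
    · intro h
      exact absurd (Finset.mem_range.2 (by omega)) h
  · rw [if_neg (by simp [ht, Nat.even_add_one, parity_simps])]
    apply Finset.sum_eq_zero
    intro k hk
    rw [Finset.mem_range] at hk
    have : n - 2 * k ≠ 0 := by omega
    simp [eval_mul, eval_pow, zero_pow this]

lemma poly_eq_of_deriv_eq {p q : Polynomial ℝ} (h : derivative p = derivative q)
    (h0 : p.eval 0 = q.eval 0) : p = q := by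
  have hd : derivative (p - q) = 0 := by rw [derivative_sub, h, sub_self]
  have := Polynomial.natDegree_eq_zero_of_derivative_eq_zero hd
  have hc := Polynomial.eq_C_of_natDegree_eq_zero this
  have hz : p - q = 0 := by
    rw [hc]
    have : (p - q).eval 0 = 0 := by rw [eval_sub, h0, sub_self]
    rw [hc] at this
    simp only [eval_C] at this
    rw [this, map_zero]
  exact sub_eq_zero.1 hz

lemma hermiteVar_comp_add (ν : ℝ) (n : ℕ) (z : ℝ) :
    (hermiteVar ν n).comp (C z + X) =
      ∑ m ∈ Finset.range (n + 1),
        C ((hermiteVar ν (n - m)).eval z / (Nat.factorial m : ℝ)) * X ^ m := by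
  induction n generalizing z with
  | zero => simp [hermiteVar_zero]
  | succ n ih =>
      apply poly_eq_of_deriv_eq
      · rw [derivative_comp, derivative_hermiteVar]
        rw [derivative_sum]
        have hR : ∀ m ∈ Finset.range (n + 2),
            derivative (C ((hermiteVar ν (n + 1 - m)).eval z / (Nat.factorial m : ℝ)) * X ^ m)
            = C ((hermiteVar ν (n + 1 - m)).eval z / (Nat.factorial m : ℝ)) *
                (C (m : ℝ) * X ^ (m - 1)) := by
          intro m _
          rw [derivative_C_mul, derivative_X_pow]
        rw [Finset.sum_congr rfl hR, Finset.sum_range_succ']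
        simp only [Nat.cast_zero, map_zero, mul_zero, zero_mul, add_zero, Nat.add_sub_cancel]
        rw [ih z]
        simp only [derivative_add, derivative_C, derivative_X, zero_add, one_mul]
        apply Finset.sum_congr rfl
        intro m _
        simp only [Nat.succ_sub_succ, Nat.add_sub_cancel]
        rw [← mul_assoc, ← C_mul]
        congr 1
        rw [Nat.factorial_succ]
        have h1 : (Nat.factorial m : ℝ) ≠ 0 := Nat.cast_ne_zero.2 (Nat.factorial_ne_zero m)
        push_cast
        field_simp
      · rw [eval_comp]
        simp only [eval_add, eval_C, eval_X, add_zero]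
        rw [eval_finset_sum, Finset.sum_eq_single 0]
        · simp
        · intro m _ hm
          simp [zero_pow hm]
        · intro h
          exact absurd (Finset.mem_range.2 (by omega)) h

lemma hermiteVar_convolution_poly (ν : ℝ) (n : ℕ) (y : ℝ) :
    ∑ m ∈ Finset.range (n + 1),
        C (gc ν m) * (hermiteVar ν (n - m)).comp (X + C y)
      = ∑ k ∈ Finset.range (n + 1),
          hermiteVar ν k * C ((hermiteVar ν (n - k)).eval y) := by
  induction n generalizing y with
  | zero => simp [hermiteVar_zero, gc_zero]
  | succ n ih =>
      apply poly_eq_of_deriv_eq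
      · rw [derivative_sum, derivative_sum]
        have hL : ∀ m ∈ Finset.range (n + 2),
            derivative (C (gc ν m) * (hermiteVar ν (n + 1 - m)).comp (X + C y))
            = C (gc ν m) * (derivative (hermiteVar ν (n + 1 - m))).comp (X + C y) := by
          intro m _
          rw [derivative_C_mul, derivative_comp]
          simp
        have hR : ∀ k ∈ Finset.range (n + 2),
            derivative (hermiteVar ν k * C ((hermiteVar ν (n + 1 - k)).eval y))
            = derivative (hermiteVar ν k) * C ((hermiteVar ν (n + 1 - k)).eval y) := by
          intro k _
          rw [derivative_mul, derivative_C, mul_zero, add_zero]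
        rw [Finset.sum_congr rfl hL, Finset.sum_congr rfl hR]
        conv_lhs => rw [Finset.sum_range_succ]
        conv_rhs => rw [Finset.sum_range_succ']
        have e1 : n + 1 - (n + 1) = 0 := by omega
        rw [e1]
        simp only [hermiteVar_zero, derivative_C, zero_comp, mul_zero, add_zero, zero_mul]
        have hL2 : ∀ m ∈ Finset.range (n + 1),
            C (gc ν m) * (derivative (hermiteVar ν (n + 1 - m))).comp (X + C y)
            = C (gc ν m) * (hermiteVar ν (n - m)).comp (X + C y) := by
          intro m hm
          rw [Finset.mem_range] at hm
          have e2 : n + 1 - m = (n - m) + 1 := by omega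
          rw [e2, derivative_hermiteVar]
        rw [Finset.sum_congr rfl hL2]
        simp only [Nat.succ_sub_succ, derivative_hermiteVar]
        exact ih y
      · rw [eval_finset_sum, eval_finset_sum]
        apply Finset.sum_congr rfl
        intro k _
        simp [eval_comp, eval_zero_hermiteVar]

lemma integrable_pow_gauss {b : ℝ} (hb : 0 < b) (m : ℕ) :
    Integrable fun u : ℝ => u ^ m * Real.exp (-b * u ^ 2) := by
  have h := integrable_rpow_mul_exp_neg_mul_sq hb (s := (m : ℝ)) (lt_of_lt_of_le (by norm_num) (Nat.cast_nonneg m))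
  simpa [Real.rpow_natCast] using h

lemma gauss_tendsto_top {b : ℝ} (hb : 0 < b) (m : ℕ) :
    Tendsto (fun u : ℝ => u ^ m * Real.exp (-b * u ^ 2)) atTop (𝓝 0) := by
  have h := (rpow_mul_exp_neg_mul_sq_isLittleO_exp_neg hb (m : ℝ)).tendsto_zero_of_tendsto
    (Real.tendsto_exp_atBot.comp <| tendsto_id.const_mul_atTop_of_neg
      (neg_lt_zero.mpr one_half_pos))
  simpa [Real.rpow_natCast] using h

lemma gauss_tendsto_bot {b : ℝ} (hb : 0 < b) (m : ℕ) :
    Tendsto (fun u : ℝ => u ^ m * Real.exp (-b * u ^ 2)) atBot (𝓝 0) := by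
  have h := (gauss_tendsto_top hb m).comp tendsto_neg_atBot_atTop
  have h2 := h.const_mul ((-1 : ℝ) ^ m)
  rw [mul_zero] at h2
  refine h2.congr fun u => ?_
  simp only [Function.comp_apply]
  rcases Nat.even_or_odd m with hm | hm
  · simp [hm.neg_pow, hm.neg_one_pow, neg_sq]
  · simp only [hm.neg_pow, hm.neg_one_pow, neg_sq, neg_mul, neg_neg, one_mul]
    ring

lemma gauss_moment_rec {b : ℝ} (hb : 0 < b) (m : ℕ) :
    ∫ u : ℝ, u ^ (m + 2) * Real.exp (-b * u ^ 2)
      = ((m + 1 : ℝ) / (2 * b)) * ∫ u : ℝ, u ^ m * Real.exp (-b * u ^ 2) := by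
  set φ : ℝ → ℝ := fun u => u ^ (m + 1) * Real.exp (-b * u ^ 2) with hφ
  set φ' : ℝ → ℝ := fun u =>
    (m + 1 : ℝ) * (u ^ m * Real.exp (-b * u ^ 2))
      - (2 * b) * (u ^ (m + 2) * Real.exp (-b * u ^ 2)) with hφ'
  have hder : ∀ u : ℝ, HasDerivAt φ (φ' u) u := by
    intro u
    have h1 : HasDerivAt (fun u : ℝ => u ^ (m + 1)) ((m + 1 : ℝ) * u ^ m) u := by
      simpa using hasDerivAt_pow (m + 1) u
    have h2 : HasDerivAt (fun u : ℝ => Real.exp (-b * u ^ 2))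
        (Real.exp (-b * u ^ 2) * (-b * (2 * u))) u := by
      have := ((hasDerivAt_pow 2 u).const_mul (-b)).exp
      simpa using this
    have : HasDerivAt φ _ u := h1.mul h2
    convert this using 1
    show (m + 1 : ℝ) * (u ^ m * Real.exp (-b * u ^ 2)) - (2 * b) * (u ^ (m + 2) * Real.exp (-b * u ^ 2)) = _
    ring
  have hint : Integrable φ' := by
    exact (((integrable_pow_gauss hb m).const_mul _).sub
      ((integrable_pow_gauss hb (m + 2)).const_mul _))
  have htop : Tendsto φ atTop (𝓝 0) := gauss_tendsto_top hb (m + 1)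
  have hbot : Tendsto φ atBot (𝓝 0) := gauss_tendsto_bot hb (m + 1)
  have hIoi : ∫ u in Set.Ioi (0 : ℝ), φ' u = 0 - φ 0 :=
    integral_Ioi_of_hasDerivAt_of_tendsto' (fun u _ => hder u) hint.integrableOn htop
  have hIic : ∫ u in Set.Iic (0 : ℝ), φ' u = φ 0 - 0 :=
    integral_Iic_of_hasDerivAt_of_tendsto' (fun u _ => hder u) hint.integrableOn hbot
  have htot : ∫ u : ℝ, φ' u = 0 := by
    rw [← intervalIntegral.integral_Iic_add_Ioi hint.integrableOn hint.integrableOn, hIoi, hIic]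
    ring
  rw [hφ', integral_sub ((integrable_pow_gauss hb m).const_mul _)
      ((integrable_pow_gauss hb (m + 2)).const_mul _),
    integral_const_mul, integral_const_mul] at htot
  have h2b : (2 * b) ≠ 0 := by positivity
  rw [div_mul_eq_mul_div, eq_div_iff h2b]
  linarith

lemma gauss_moment_one {b : ℝ} (hb : 0 < b) :
    ∫ u : ℝ, u ^ 1 * Real.exp (-b * u ^ 2) = 0 := by
  have h := integral_neg_eq_self (fun u : ℝ => u ^ 1 * Real.exp (-b * u ^ 2)) volume
  simp only [pow_one, neg_sq, neg_mul] at h ⊢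
  rw [integral_neg] at h
  linarith

lemma gc_step (ν : ℝ) (m : ℕ) :
    ((m : ℝ) + 1) * (-ν) * ((Nat.factorial m : ℝ) * gc ν m)
      = (Nat.factorial (m + 2) : ℝ) * gc ν (m + 2) := by
  rcases Nat.even_or_odd m with hm | hm
  · obtain ⟨j, rfl⟩ := hm
    have hm2 : Even (j + j + 2) := ⟨j + 1, by omega⟩
    unfold gc
    rw [if_pos ⟨j, rfl⟩, if_pos hm2]
    have e1 : (j + j) / 2 = j := by omega
    have e2 : (j + j + 2) / 2 = j + 1 := by omega
    rw [e1, e2, pow_succ, Nat.factorial_succ j, Nat.factorial_succ (j + j + 1),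
      Nat.factorial_succ (j + j)]
    have h1 : (Nat.factorial j : ℝ) ≠ 0 := Nat.cast_ne_zero.2 (Nat.factorial_ne_zero _)
    have h2 : (Nat.factorial (j + j) : ℝ) ≠ 0 := Nat.cast_ne_zero.2 (Nat.factorial_ne_zero _)
    push_cast
    field_simp
    ring
  · have h1 : ¬ Even m := Nat.not_even_iff_odd.2 hm
    have h2 : ¬ Even (m + 2) := by
      rcases hm with ⟨j, hj⟩
      rintro ⟨r, hr⟩
      omega
    unfold gc
    rw [if_neg h1, if_neg h2]
    ring

lemma gauss_moment_norm (ν : ℝ) (hν : ν < 0) (m : ℕ) :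
    (1 / Real.sqrt (-2 * Real.pi * ν)) *
        ∫ u : ℝ, u ^ m * Real.exp (-(-(2 * ν))⁻¹ * u ^ 2)
      = (Nat.factorial m : ℝ) * gc ν m := by
  have h2ν : (0 : ℝ) < -(2 * ν) := by linarith
  have hb : (0 : ℝ) < (-(2 * ν))⁻¹ := inv_pos.2 h2ν
  induction m using Nat.twoStepInduction with
  | zero =>
      simp only [pow_zero, one_mul]
      rw [integral_gaussian]
      have hπ : Real.pi / (-(2 * ν))⁻¹ = -2 * Real.pi * ν := by
        rw [div_inv_eq_mul]
        ring
      rw [hπ]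
      have hpos : (0 : ℝ) < -2 * Real.pi * ν := by
        have := Real.pi_pos
        nlinarith
      rw [one_div, inv_mul_cancel₀ (Real.sqrt_ne_zero'.2 hpos)]
      simp [gc]
  | one =>
      rw [gauss_moment_one hb]
      have : ¬ Even 1 := by decide
      simp [gc, this]
  | more m ih _ =>
      rw [gauss_moment_rec hb m]
      have hcomm : (1 / Real.sqrt (-2 * Real.pi * ν)) *
          (((m : ℝ) + 1) / (2 * (-(2 * ν))⁻¹) *
            ∫ u : ℝ, u ^ m * Real.exp (-(-(2 * ν))⁻¹ * u ^ 2))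
          = ((m : ℝ) + 1) / (2 * (-(2 * ν))⁻¹) *
            ((1 / Real.sqrt (-2 * Real.pi * ν)) *
              ∫ u : ℝ, u ^ m * Real.exp (-(-(2 * ν))⁻¹ * u ^ 2)) := by ring
      rw [hcomm, ih]
      have hd : ((m : ℝ) + 1) / (2 * (-(2 * ν))⁻¹) = ((m : ℝ) + 1) * (-ν) := by
        have hνne : ν ≠ 0 := ne_of_lt hν
        field_simp
      rw [hd]
      rw [← gc_step ν m]

/-- Gaussian convolution identity for the Hermite polynomials of
variance `ν < 0`:
`(1/√(-2πν)) ∫ e^{u²/(2ν)} H_n^ν(x+y+u) du = ∑_{k=0}^n H_k^ν(x) H_{n-k}^ν(y)`. -/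
theorem hermite_gaussian_convolution (ν : ℝ) (hν : ν < 0) (n : ℕ) (x y : ℝ) :
    (1 / Real.sqrt (-2 * Real.pi * ν)) *
        ∫ u : ℝ, Real.exp (u ^ 2 / (2 * ν)) * (hermiteVar ν n).eval (x + y + u) =
      ∑ k ∈ Finset.range (n + 1),
        (hermiteVar ν k).eval x * (hermiteVar ν (n - k)).eval y := by
  have hνne : ν ≠ 0 := ne_of_lt hν
  have h2ν : (0 : ℝ) < -(2 * ν) := by linarith
  have hb : (0 : ℝ) < (-(2 * ν))⁻¹ := inv_pos.2 h2ν
  have hexp : ∀ u : ℝ, u ^ 2 / (2 * ν) = -(-(2 * ν))⁻¹ * u ^ 2 := by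
    intro u
    rw [inv_neg, neg_neg, div_eq_mul_inv, mul_comm]
  have haddf : ∀ u : ℝ, (hermiteVar ν n).eval (x + y + u)
      = ∑ m ∈ Finset.range (n + 1),
          ((hermiteVar ν (n - m)).eval (x + y) / (Nat.factorial m : ℝ)) * u ^ m := by
    intro u
    have h := congrArg (eval u) (hermiteVar_comp_add ν n (x + y))
    rw [eval_comp, eval_finset_sum] at h
    simpa using h
  have e : ∀ u : ℝ, Real.exp (u ^ 2 / (2 * ν)) * (hermiteVar ν n).eval (x + y + u)
      = ∑ m ∈ Finset.range (n + 1),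
          ((hermiteVar ν (n - m)).eval (x + y) / (Nat.factorial m : ℝ)) *
            (u ^ m * Real.exp (-(-(2 * ν))⁻¹ * u ^ 2)) := by
    intro u
    rw [haddf u, hexp u, Finset.mul_sum]
    exact Finset.sum_congr rfl fun m _ => by ring
  have hintg : ∫ u : ℝ, Real.exp (u ^ 2 / (2 * ν)) * (hermiteVar ν n).eval (x + y + u)
      = ∑ m ∈ Finset.range (n + 1),
          ((hermiteVar ν (n - m)).eval (x + y) / (Nat.factorial m : ℝ)) *
            ∫ u : ℝ, u ^ m * Real.exp (-(-(2 * ν))⁻¹ * u ^ 2) := by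
    rw [integral_congr_ae (Filter.Eventually.of_forall e)]
    rw [integral_finset_sum _ (fun m _ => ((integrable_pow_gauss hb m).const_mul _))]
    exact Finset.sum_congr rfl fun m _ => integral_const_mul _ _
  rw [hintg, Finset.mul_sum]
  have hterm : ∀ m ∈ Finset.range (n + 1),
      (1 / Real.sqrt (-2 * Real.pi * ν)) *
          (((hermiteVar ν (n - m)).eval (x + y) / (Nat.factorial m : ℝ)) *
            ∫ u : ℝ, u ^ m * Real.exp (-(-(2 * ν))⁻¹ * u ^ 2))
        = gc ν m * (hermiteVar ν (n - m)).eval (x + y) := by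
    intro m _
    have hmfac : (Nat.factorial m : ℝ) ≠ 0 := Nat.cast_ne_zero.2 (Nat.factorial_ne_zero m)
    calc (1 / Real.sqrt (-2 * Real.pi * ν)) *
          (((hermiteVar ν (n - m)).eval (x + y) / (Nat.factorial m : ℝ)) *
            ∫ u : ℝ, u ^ m * Real.exp (-(-(2 * ν))⁻¹ * u ^ 2))
        = ((hermiteVar ν (n - m)).eval (x + y) / (Nat.factorial m : ℝ)) *
            ((1 / Real.sqrt (-2 * Real.pi * ν)) *
              ∫ u : ℝ, u ^ m * Real.exp (-(-(2 * ν))⁻¹ * u ^ 2)) := by ring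
      _ = ((hermiteVar ν (n - m)).eval (x + y) / (Nat.factorial m : ℝ)) *
            ((Nat.factorial m : ℝ) * gc ν m) := by rw [gauss_moment_norm ν hν m]
      _ = gc ν m * (hermiteVar ν (n - m)).eval (x + y) := by
            field_simp
  rw [Finset.sum_congr rfl hterm]
  have h := congrArg (eval x) (hermiteVar_convolution_poly ν n y)
  rw [eval_finset_sum, eval_finset_sum] at h
  simp only [eval_mul, eval_C, eval_comp, eval_add, eval_X] at h
  exact h

end
end

section
/- Let α < −1 be a real number and let p be a polynomial with real coefficients. Then for every real x, (1/Γ(−α−1)) ∫_0^{∞} t^{−α−2} e^{−t} p(x+t) dt = Σ_{k=0}^{deg p} ( (Π_{j=0}^{k−1} (−α−1+j)) / k! ) · p^{(k)}(x). (In operator form this says that for α < −1 the shift-invariant operator (I−D)^{α+1} is represented by the stated Gamma-type integral.) -/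
open Polynomial MeasureTheory

lemma gamma_prod (s : ℝ) (hs : 0 < s) (k : ℕ) :
    Real.Gamma (s + k) = Real.Gamma s * ∏ j ∈ Finset.range k, (s + j) := by
  induction k with
  | zero => simp
  | succ n ih =>
    have h : s + (n + 1 : ℕ) = (s + n) + 1 := by push_cast; ring
    rw [h, Real.Gamma_add_one (by positivity), ih, Finset.prod_range_succ]
    ring

/-- For `α < -1`, the shift-invariant operator `(I - D)^{α+1}` is
represented by a Gamma-type integral: for every real polynomial `p` and real `x`,
`(1/Γ(-α-1)) ∫_0^∞ t^{-α-2} e^{-t} p(x+t) dt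
  = ∑_{k=0}^{deg p} ((∏_{j=0}^{k-1} (-α-1+j)) / k!) p^{(k)}(x)`. -/
theorem gamma_integral_eq_one_sub_deriv_pow (α : ℝ) (hα : α < -1) (p : Polynomial ℝ)
    (x : ℝ) :
    (1 / Real.Gamma (-α - 1)) *
        ∫ t in Set.Ioi (0 : ℝ), t ^ (-α - 2) * Real.exp (-t) * p.eval (x + t) =
      ∑ k ∈ Finset.range (p.natDegree + 1),
        ((∏ j ∈ Finset.range k, (-α - 1 + (j : ℝ))) / (Nat.factorial k : ℝ)) *
          ((Polynomial.derivative)^[k] p).eval x := by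
  set s : ℝ := -α - 1 with hs_def
  have hs : 0 < s := by simp only [hs_def]; linarith
  -- rewrite the integrand
  have hint : ∀ k : ℕ, IntegrableOn
      (fun t : ℝ => (Polynomial.hasseDeriv k p).eval x * (Real.exp (-t) * t ^ ((s + k) - 1)))
      (Set.Ioi 0) := fun k =>
    (Real.GammaIntegral_convergent (by positivity : (0:ℝ) < s + k)).const_mul _
  have key : ∀ t ∈ Set.Ioi (0 : ℝ),
      t ^ (-α - 2) * Real.exp (-t) * p.eval (x + t)
        = ∑ k ∈ Finset.range (p.natDegree + 1),
            (Polynomial.hasseDeriv k p).eval x * (Real.exp (-t) * t ^ ((s + k) - 1)) := by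
    intro t ht
    have ht' : (0:ℝ) < t := ht
    have : p.eval (x + t) = ∑ k ∈ Finset.range (p.natDegree + 1),
        (Polynomial.hasseDeriv k p).eval x * t ^ k := by
      have := Polynomial.eval_eq_sum_range' (n := p.natDegree + 1)
        (p := Polynomial.taylor x p) (by rw [Polynomial.natDegree_taylor]; omega) t
      rw [Polynomial.taylor_eval, add_comm t x] at this
      rw [this]
      exact Finset.sum_congr rfl fun k _ => by rw [Polynomial.taylor_coeff]
    rw [this, Finset.mul_sum]
    refine Finset.sum_congr rfl fun k _ => ?_
    have : t ^ ((s + k) - 1) = t ^ (-α - 2) * t ^ (k : ℕ) := by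
      rw [← Real.rpow_natCast t k, ← Real.rpow_add ht']
      congr 1
      simp only [hs_def]; ring
    rw [this]; ring
  rw [setIntegral_congr_fun measurableSet_Ioi key, integral_finset_sum _ fun k _ => hint k,
    Finset.mul_sum]
  refine Finset.sum_congr rfl fun k _ => ?_
  rw [integral_const_mul]
  have hgamma : ∫ t in Set.Ioi (0:ℝ), Real.exp (-t) * t ^ ((s + k) - 1)
      = Real.Gamma (s + k) := (Real.Gamma_eq_integral (by positivity)).symm
  rw [hgamma, gamma_prod s hs k]
  have hd : ((Polynomial.derivative)^[k] p).eval x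
      = (k.factorial : ℝ) * (Polynomial.hasseDeriv k p).eval x := by
    rw [← Polynomial.factorial_smul_hasseDeriv (R := ℝ) k]
    simp [Polynomial.eval_smul, mul_comm]
  have hΓ : Real.Gamma s ≠ 0 := (Real.Gamma_pos_of_pos hs).ne'
  have hk : (k.factorial : ℝ) ≠ 0 := by positivity
  rw [hd]
  have hprod : ∀ j ∈ Finset.range k, (s + (j:ℝ)) = (-α - 1 + (j:ℝ)) := fun j _ => by
    simp [hs_def]
  rw [Finset.prod_congr rfl hprod] at *
  field_simp
end

section
/- For a real number α and n ∈ ℕ define the Laguerre polynomial of order α by L_n^α(x) = Σ_{k=0}^n ( (−1)^k / (k!(n−k)!) ) (Π_{j=k+1}^n (α+j)) x^k. Then for every α < −1, every n ∈ ℕ, and all real x, y: (1/Γ(−α−1)) ∫_0^{∞} t^{−α−2} e^{−t} L_n^α(x+y+t) dt = Σ_{k=0}^n L_k^α(x) L_{n−k}^α(y). -/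
open Polynomial MeasureTheory

noncomputable section

/-- The Laguerre polynomial of order `α`:
`L_n^α(x) = ∑_{k=0}^n ((-1)^k / (k!(n-k)!)) (∏_{j=k+1}^n (α+j)) x^k`. -/
def laguerre (α : ℝ) (n : ℕ) : Polynomial ℝ :=
  ∑ k ∈ Finset.range (n + 1),
    C (((-1 : ℝ) ^ k / ((Nat.factorial k : ℝ) * (Nat.factorial (n - k) : ℝ))) *
        ∏ j ∈ Finset.Icc (k + 1) n, (α + (j : ℝ))) *
      X ^ k

open Finset

theorem asc_eval (m : ℕ) (r : ℝ) : (ascPochhammer ℝ m).eval r = ∏ q ∈ range m, (r + q) := by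
  induction m with
  | zero => simp
  | succ m ih => rw [ascPochhammer_succ_eval, ih, prod_range_succ]

theorem desc_eval (m : ℕ) (r : ℝ) : (descPochhammer ℝ m).eval r = ∏ q ∈ range m, (r - q) := by
  induction m with
  | zero => simp
  | succ m ih => rw [descPochhammer_succ_eval, ih, prod_range_succ]

theorem asc_eq_desc (k : ℕ) (r : ℝ) :
    (ascPochhammer ℝ k).eval r = (-1) ^ k * (descPochhammer ℝ k).eval (-r) := by
  simpa using ascPochhammer_eval_neg_eq_descPochhammer (R := ℝ) (-r) k

theorem prod_Icc_asc (α : ℝ) {k p : ℕ} (h : k ≤ p) :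
    ∏ j ∈ Icc (k+1) p, (α + (j:ℝ)) = (ascPochhammer ℝ (p - k)).eval (α + k + 1) := by
  rw [asc_eval, ← Finset.Ico_add_one_right_eq_Icc, Finset.prod_Ico_eq_prod_range]
  have h1 : p + 1 - (k + 1) = p - k := by omega
  rw [h1]
  refine Finset.prod_congr rfl fun i _ => ?_
  push_cast; ring

theorem prod_Icc_desc (α : ℝ) {k p : ℕ} (h : k ≤ p) :
    ∏ j ∈ Icc (k+1) p, (α + (j:ℝ)) = (descPochhammer ℝ (p - k)).eval (α + p) := by
  rw [desc_eval, ← Finset.Ico_add_one_right_eq_Icc, Finset.prod_Ico_eq_prod_range]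
  have h1 : p + 1 - (k + 1) = p - k := by omega
  rw [h1, ← Finset.prod_range_reflect]
  refine Finset.prod_congr rfl fun i hi => ?_
  rw [mem_range] at hi
  have h2 : k + 1 + (p - k - 1 - i) = p - i := by omega
  rw [h2]
  have h3 : ((p - i : ℕ) : ℝ) = (p : ℝ) - i := by
    have : i ≤ p := by omega
    push_cast [this]; ring
  rw [h3]
  ring

theorem smeval_int (p : ℤ[X]) (r : ℝ) : p.smeval r = (p.map (Int.castRingHom ℝ)).eval r := by
  rw [eval_map, ← eval₂_smulOneHom_eq_smeval]
  congr 1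
  exact Subsingleton.elim _ _

theorem desc_add (r s : ℝ) (k : ℕ) : (descPochhammer ℝ k).eval (r + s) =
    ∑ m ∈ range (k + 1), (k.choose m : ℝ) *
      ((descPochhammer ℝ m).eval r * (descPochhammer ℝ (k - m)).eval s) := by
  have h := Ring.descPochhammer_smeval_add (R := ℝ) (r := r) (s := s) k (Commute.all r s)
  rw [Finset.Nat.sum_antidiagonal_eq_sum_range_succ_mk] at h
  simpa only [smeval_int, descPochhammer_map] using h

theorem asc_add (r s : ℝ) (k : ℕ) : (ascPochhammer ℝ k).eval (r + s) =
    ∑ m ∈ range (k + 1), (k.choose m : ℝ) *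
      ((ascPochhammer ℝ m).eval r * (ascPochhammer ℝ (k - m)).eval s) := by
  rw [asc_eq_desc, neg_add, desc_add, Finset.mul_sum]
  refine Finset.sum_congr rfl fun m hm => ?_
  rw [mem_range] at hm
  rw [asc_eq_desc m r, asc_eq_desc (k - m) s]
  have hk : k = m + (k - m) := by omega
  have : ((-1 : ℝ)) ^ k = (-1) ^ m * (-1) ^ (k - m) := by
    rw [← pow_add, ← hk]
  rw [this]
  ring_nf

theorem desc_add_neg (r s : ℝ) (k : ℕ) : (descPochhammer ℝ k).eval (s - r) =
    ∑ m ∈ range (k + 1), (k.choose m : ℝ) *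
      ((-1) ^ m * (ascPochhammer ℝ m).eval r * (descPochhammer ℝ (k - m)).eval s) := by
  have h : s - r = -r + s := by ring
  rw [h, desc_add]
  refine Finset.sum_congr rfl fun m hm => ?_
  rw [asc_eq_desc m r]
  have hsq : ((-1 : ℝ)) ^ m * (-1) ^ m = 1 := by
    rw [← pow_add]; exact Even.neg_one_pow ⟨m, rfl⟩
  linear_combination (-((k.choose m : ℝ) * (descPochhammer ℝ m).eval (-r) *
    (descPochhammer ℝ (k - m)).eval s)) * hsq

noncomputable def lc (α : ℝ) (n k : ℕ) : ℝ :=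
  ((-1 : ℝ) ^ k / ((Nat.factorial k : ℝ) * (Nat.factorial (n - k) : ℝ))) *
    ∏ j ∈ Finset.Icc (k + 1) n, (α + (j : ℝ))

/-- identity B'' -/
theorem keyB (α : ℝ) (n j : ℕ) (hj : j ≤ n) :
    ∑ m ∈ range (n - j + 1), lc α n (j + m) * ((j + m).choose j : ℝ) *
      (ascPochhammer ℝ m).eval (-α - 1) = lc (2 * α + 1) n j := by
  set N := n - j with hN
  have key := desc_add_neg (-α - 1) (α + n) N
  have h2 : α + (n : ℝ) - (-α - 1) = 2 * α + 1 + n := by ring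
  rw [h2] at key
  rw [lc, prod_Icc_desc _ hj, ← hN, key, Finset.mul_sum]
  refine Finset.sum_congr rfl fun m hm => ?_
  rw [mem_range] at hm
  have hjm : j + m ≤ n := by omega
  rw [lc, prod_Icc_desc _ hjm]
  have e1 : n - (j + m) = N - m := by omega
  rw [e1]
  have hc : ((j + m).choose j : ℝ) = (j + m).factorial / (j.factorial * m.factorial) := by
    rw [Nat.cast_choose ℝ (Nat.le_add_right j m), Nat.add_sub_cancel_left]
  have hC : (N.choose m : ℝ) = N.factorial / (m.factorial * (N - m).factorial) := by
    rw [Nat.cast_choose ℝ (by omega : m ≤ N)]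
  rw [hc, hC, pow_add]
  have f1 : (Nat.factorial (j + m) : ℝ) ≠ 0 := Nat.cast_ne_zero.2 (Nat.factorial_ne_zero _)
  have f2 : (Nat.factorial j : ℝ) ≠ 0 := Nat.cast_ne_zero.2 (Nat.factorial_ne_zero _)
  have f3 : (Nat.factorial m : ℝ) ≠ 0 := Nat.cast_ne_zero.2 (Nat.factorial_ne_zero _)
  have f4 : (Nat.factorial (N - m) : ℝ) ≠ 0 := Nat.cast_ne_zero.2 (Nat.factorial_ne_zero _)
  have f5 : (Nat.factorial N : ℝ) ≠ 0 := Nat.cast_ne_zero.2 (Nat.factorial_ne_zero _)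
  field_simp

theorem lc_def (α : ℝ) (n k : ℕ) : lc α n k =
    ((-1 : ℝ) ^ k / ((Nat.factorial k : ℝ) * (Nat.factorial (n - k) : ℝ))) *
      ∏ j ∈ Finset.Icc (k + 1) n, (α + (j : ℝ)) := rfl

/-- identity A' -/
theorem keyA (α : ℝ) (n i j : ℕ) (hij : i + j ≤ n) :
    ∑ m ∈ range (n - i - j + 1), lc α (i + m) i * lc α (n - i - m) j =
      ((i + j).choose i : ℝ) * lc (2 * α + 1) n (i + j) := by
  set N := n - i - j with hN
  have key := asc_add (α + i + 1) (α + j + 1) N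
  rw [lc_def, prod_Icc_asc _ hij]
  have e0 : n - (i + j) = N := by omega
  have harg : 2 * α + 1 + ((i + j : ℕ) : ℝ) + 1 = (α + i + 1) + (α + j + 1) := by
    push_cast; ring
  rw [e0, harg, key, Finset.mul_sum, Finset.mul_sum]
  refine Finset.sum_congr rfl fun m hm => ?_
  rw [mem_range] at hm
  have h1 : i ≤ i + m := Nat.le_add_right i m
  have h2 : j ≤ n - i - m := by omega
  rw [lc_def, lc_def, prod_Icc_asc _ h1, prod_Icc_asc _ h2]
  have e1 : i + m - i = m := by omega
  have e2 : n - i - m - j = N - m := by omega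
  rw [e1, e2]
  have hc : ((i + j).choose i : ℝ) = (i + j).factorial / (i.factorial * j.factorial) := by
    rw [Nat.cast_choose ℝ (Nat.le_add_right i j), Nat.add_sub_cancel_left]
  have hC : (N.choose m : ℝ) = N.factorial / (m.factorial * (N - m).factorial) := by
    rw [Nat.cast_choose ℝ (by omega : m ≤ N)]
  rw [hc, hC, pow_add]
  have f1 : (Nat.factorial i : ℝ) ≠ 0 := Nat.cast_ne_zero.2 (Nat.factorial_ne_zero _)
  have f2 : (Nat.factorial j : ℝ) ≠ 0 := Nat.cast_ne_zero.2 (Nat.factorial_ne_zero _)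
  have f3 : (Nat.factorial m : ℝ) ≠ 0 := Nat.cast_ne_zero.2 (Nat.factorial_ne_zero _)
  have f4 : (Nat.factorial (N - m) : ℝ) ≠ 0 := Nat.cast_ne_zero.2 (Nat.factorial_ne_zero _)
  have f5 : (Nat.factorial N : ℝ) ≠ 0 := Nat.cast_ne_zero.2 (Nat.factorial_ne_zero _)
  have f6 : (Nat.factorial (i + j) : ℝ) ≠ 0 := Nat.cast_ne_zero.2 (Nat.factorial_ne_zero _)
  field_simp

theorem identB (α : ℝ) (n : ℕ) (s : ℝ) :
    ∑ k ∈ range (n + 1), ∑ m ∈ range (k + 1),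
        lc α n k * ((k.choose m : ℝ) * s ^ (k - m)) * (ascPochhammer ℝ m).eval (-α - 1) =
      ∑ j ∈ range (n + 1), lc (2 * α + 1) n j * s ^ j := by
  have hR : ∀ j ∈ range (n + 1), lc (2 * α + 1) n j * s ^ j =
      ∑ m ∈ range (n - j + 1),
        lc α n (j + m) * ((j + m).choose j : ℝ) * (ascPochhammer ℝ m).eval (-α - 1) * s ^ j := by
    intro j hj
    rw [mem_range] at hj
    rw [← Finset.sum_mul, keyB α n j (by omega)]
  calc ∑ k ∈ range (n + 1), ∑ m ∈ range (k + 1),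
        lc α n k * ((k.choose m : ℝ) * s ^ (k - m)) * (ascPochhammer ℝ m).eval (-α - 1)
      = ∑ p ∈ (range (n + 1)).sigma (fun k => range (k + 1)),
          lc α n p.1 * ((p.1.choose p.2 : ℝ) * s ^ (p.1 - p.2)) *
            (ascPochhammer ℝ p.2).eval (-α - 1) := by
        exact (Finset.sum_sigma (range (n + 1)) (fun k => range (k + 1)) (fun p =>
          lc α n p.1 * ((p.1.choose p.2 : ℝ) * s ^ (p.1 - p.2)) *
            (ascPochhammer ℝ p.2).eval (-α - 1))).symm
    _ = ∑ q ∈ (range (n + 1)).sigma (fun j => range (n - j + 1)),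
          lc α n (q.1 + q.2) * ((q.1 + q.2).choose q.1 : ℝ) *
            (ascPochhammer ℝ q.2).eval (-α - 1) * s ^ q.1 := by
        refine Finset.sum_nbij' (fun p => ⟨p.1 - p.2, p.2⟩) (fun q => ⟨q.1 + q.2, q.2⟩)
          ?_ ?_ ?_ ?_ ?_
        · rintro ⟨k, m⟩ hp
          simp only [mem_sigma, mem_range] at hp ⊢
          omega
        · rintro ⟨j, m⟩ hq
          simp only [mem_sigma, mem_range] at hq ⊢
          omega
        · rintro ⟨k, m⟩ hp
          simp only [mem_sigma, mem_range] at hp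
          have e : k - m + m = k := by omega
          simp [e]
        · rintro ⟨j, m⟩ hq
          simp only [mem_sigma, mem_range] at hq
          have e : j + m - m = j := by omega
          simp [e]
        · rintro ⟨k, m⟩ hp
          simp only [mem_sigma, mem_range] at hp
          simp only
          have e1 : k - m + m = k := by omega
          rw [e1, ← Nat.choose_symm (by omega : m ≤ k)]
          ring
    _ = ∑ j ∈ range (n + 1), ∑ m ∈ range (n - j + 1),
          lc α n (j + m) * ((j + m).choose j : ℝ) *
            (ascPochhammer ℝ m).eval (-α - 1) * s ^ j := by
        exact Finset.sum_sigma (range (n + 1)) (fun j => range (n - j + 1)) (fun q =>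
          lc α n (q.1 + q.2) * ((q.1 + q.2).choose q.1 : ℝ) *
            (ascPochhammer ℝ q.2).eval (-α - 1) * s ^ q.1)
    _ = ∑ j ∈ range (n + 1), lc (2 * α + 1) n j * s ^ j :=
        (Finset.sum_congr rfl hR).symm

theorem identA (α : ℝ) (n : ℕ) (x y : ℝ) :
    ∑ p ∈ range (n + 1), lc (2 * α + 1) n p * (x + y) ^ p =
      ∑ k ∈ range (n + 1),
        (∑ i ∈ range (k + 1), lc α k i * x ^ i) *
          (∑ j ∈ range (n - k + 1), lc α (n - k) j * y ^ j) := by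
  calc ∑ p ∈ range (n + 1), lc (2 * α + 1) n p * (x + y) ^ p
      = ∑ p ∈ range (n + 1), ∑ i ∈ range (p + 1),
          lc (2 * α + 1) n p * (x ^ i * y ^ (p - i) * (p.choose i : ℝ)) := by
        refine Finset.sum_congr rfl fun p _ => ?_
        rw [add_pow, Finset.mul_sum]
    _ = ∑ a ∈ (range (n + 1)).sigma (fun p => range (p + 1)),
          lc (2 * α + 1) n a.1 * (x ^ a.2 * y ^ (a.1 - a.2) * (a.1.choose a.2 : ℝ)) := by
        exact (Finset.sum_sigma (range (n + 1)) (fun p => range (p + 1)) (fun a =>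
          lc (2 * α + 1) n a.1 * (x ^ a.2 * y ^ (a.1 - a.2) * (a.1.choose a.2 : ℝ)))).symm
    _ = ∑ q ∈ (range (n + 1)).sigma (fun i => range (n + 1 - i)),
          lc (2 * α + 1) n (q.1 + q.2) * (x ^ q.1 * y ^ q.2 * ((q.1 + q.2).choose q.1 : ℝ)) := by
        refine Finset.sum_nbij' (fun a => ⟨a.2, a.1 - a.2⟩) (fun q => ⟨q.1 + q.2, q.1⟩)
          ?_ ?_ ?_ ?_ ?_
        · rintro ⟨p, i⟩ hp
          simp only [mem_sigma, mem_range] at hp ⊢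
          omega
        · rintro ⟨i, j⟩ hq
          simp only [mem_sigma, mem_range] at hq ⊢
          omega
        · rintro ⟨p, i⟩ hp
          simp only [mem_sigma, mem_range] at hp
          have e : i + (p - i) = p := by omega
          simp [e]
        · rintro ⟨i, j⟩ hq
          simp only [mem_sigma, mem_range] at hq
          have e : i + j - i = j := by omega
          simp [e]
        · rintro ⟨p, i⟩ hp
          simp only [mem_sigma, mem_range] at hp
          have e : i + (p - i) = p := by omega
          simp only [e]
    _ = ∑ q ∈ (range (n + 1)).sigma (fun i => range (n + 1 - i)),
          ∑ m ∈ range (n - q.1 - q.2 + 1),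
            lc α (q.1 + m) q.1 * lc α (n - q.1 - m) q.2 * (x ^ q.1 * y ^ q.2) := by
        refine Finset.sum_congr rfl fun q hq => ?_
        simp only [mem_sigma, mem_range] at hq
        rw [← Finset.sum_mul, keyA α n q.1 q.2 (by omega)]
        ring
    _ = ∑ v ∈ ((range (n + 1)).sigma (fun i => range (n + 1 - i))).sigma
          (fun q => range (n - q.1 - q.2 + 1)),
          lc α (v.1.1 + v.2) v.1.1 * lc α (n - v.1.1 - v.2) v.1.2 * (x ^ v.1.1 * y ^ v.1.2) := by
        exact (Finset.sum_sigma ((range (n + 1)).sigma (fun i => range (n + 1 - i)))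
          (fun q => range (n - q.1 - q.2 + 1)) (fun v =>
            lc α (v.1.1 + v.2) v.1.1 * lc α (n - v.1.1 - v.2) v.1.2 *
              (x ^ v.1.1 * y ^ v.1.2))).symm
    _ = ∑ w ∈ (range (n + 1)).sigma (fun k => (range (k + 1)) ×ˢ (range (n - k + 1))),
          lc α w.1 w.2.1 * x ^ w.2.1 * (lc α (n - w.1) w.2.2 * y ^ w.2.2) := by
        refine Finset.sum_nbij' (fun v => ⟨v.1.1 + v.2, (v.1.1, v.1.2)⟩)
          (fun w => ⟨⟨w.2.1, w.2.2⟩, w.1 - w.2.1⟩) ?_ ?_ ?_ ?_ ?_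
        · rintro ⟨⟨i, j⟩, m⟩ hv
          simp only [mem_sigma, mem_range, mem_product] at hv ⊢
          omega
        · rintro ⟨k, i, j⟩ hw
          simp only [mem_sigma, mem_range, mem_product] at hw ⊢
          omega
        · rintro ⟨⟨i, j⟩, m⟩ hv
          simp only [mem_sigma, mem_range, mem_product] at hv
          have e : i + m - i = m := by omega
          simp [e]
        · rintro ⟨k, i, j⟩ hw
          simp only [mem_sigma, mem_range, mem_product] at hw
          have e : i + (k - i) = k := by omega
          simp [e]
        · rintro ⟨⟨i, j⟩, m⟩ hv
          simp only [mem_sigma, mem_range, mem_product] at hv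
          simp only
          rw [← Nat.sub_sub]
          ring
    _ = ∑ k ∈ range (n + 1), ∑ ij ∈ (range (k + 1)) ×ˢ (range (n - k + 1)),
          lc α k ij.1 * x ^ ij.1 * (lc α (n - k) ij.2 * y ^ ij.2) := by
        exact Finset.sum_sigma (range (n + 1))
          (fun k => (range (k + 1)) ×ˢ (range (n - k + 1))) (fun w =>
            lc α w.1 w.2.1 * x ^ w.2.1 * (lc α (n - w.1) w.2.2 * y ^ w.2.2))
    _ = ∑ k ∈ range (n + 1),
        (∑ i ∈ range (k + 1), lc α k i * x ^ i) *
          (∑ j ∈ range (n - k + 1), lc α (n - k) j * y ^ j) := by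
        refine Finset.sum_congr rfl fun k _ => ?_
        rw [Finset.sum_mul_sum]
        exact Finset.sum_product (range (k + 1)) (range (n - k + 1))
          (fun ij => lc α k ij.1 * x ^ ij.1 * (lc α (n - k) ij.2 * y ^ ij.2))

section Analysis
open MeasureTheory

variable {α : ℝ} (hα : α < -1)

theorem gamma_ratio (hα : α < -1) (m : ℕ) :
    Real.Gamma ((m : ℝ) - α - 1) =
      (ascPochhammer ℝ m).eval (-α - 1) * Real.Gamma (-α - 1) := by
  have hpos : 0 < -α - 1 := by linarith
  induction m with
  | zero => norm_num
  | succ m ih =>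
    have hm : (0 : ℝ) < (m : ℝ) - α - 1 := by
      have : (0:ℝ) ≤ m := Nat.cast_nonneg m
      linarith
    have e : ((m + 1 : ℕ) : ℝ) - α - 1 = ((m : ℝ) - α - 1) + 1 := by push_cast; ring
    rw [e, Real.Gamma_add_one (ne_of_gt hm), ih, ascPochhammer_succ_eval]
    ring

theorem Ig (hα : α < -1) (m : ℕ) :
    IntegrableOn (fun t : ℝ => t ^ (-α - 2) * Real.exp (-t) * t ^ m) (Set.Ioi 0) := by
  have hm : (0 : ℝ) < (m : ℝ) - α - 1 := by
    have : (0:ℝ) ≤ m := Nat.cast_nonneg m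
    linarith
  refine (Real.GammaIntegral_convergent hm).congr_fun ?_ measurableSet_Ioi
  intro t ht
  have ht' : (0 : ℝ) < t := ht
  show Real.exp (-t) * t ^ (((m : ℝ) - α - 1) - 1) = t ^ (-α - 2) * Real.exp (-t) * t ^ m
  rw [show ((m : ℝ) - α - 1) - 1 = (-α - 2) + (m : ℝ) by ring, Real.rpow_add ht',
    Real.rpow_natCast]
  ring

theorem Gval (hα : α < -1) (m : ℕ) :
    ∫ t in Set.Ioi (0:ℝ), t ^ (-α - 2) * Real.exp (-t) * t ^ m =
      Real.Gamma ((m : ℝ) - α - 1) := by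
  have hm : (0 : ℝ) < (m : ℝ) - α - 1 := by
    have : (0:ℝ) ≤ m := Nat.cast_nonneg m
    linarith
  rw [Real.Gamma_eq_integral hm]
  refine setIntegral_congr_fun measurableSet_Ioi fun t ht => ?_
  have ht' : (0 : ℝ) < t := ht
  show t ^ (-α - 2) * Real.exp (-t) * t ^ m = Real.exp (-t) * t ^ (((m : ℝ) - α - 1) - 1)
  rw [show ((m : ℝ) - α - 1) - 1 = (-α - 2) + (m : ℝ) by ring, Real.rpow_add ht',
    Real.rpow_natCast]
  ring

end Analysis


theorem laguerre_eval (α : ℝ) (n : ℕ) (z : ℝ) :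
    (laguerre α n).eval z = ∑ k ∈ range (n + 1), lc α n k * z ^ k := by
  simp only [laguerre, eval_finset_sum, eval_mul, eval_C, eval_pow, eval_X, lc_def]

/-- Gamma-type convolution identity for the Laguerre polynomials of
order `α < -1`:
`(1/Γ(-α-1)) ∫_0^∞ t^{-α-2} e^{-t} L_n^α(x+y+t) dt = ∑_{k=0}^n L_k^α(x) L_{n-k}^α(y)`. -/
theorem laguerre_gamma_convolution (α : ℝ) (hα : α < -1) (n : ℕ) (x y : ℝ) :
    (1 / Real.Gamma (-α - 1)) *
        ∫ t in Set.Ioi (0 : ℝ), t ^ (-α - 2) * Real.exp (-t) *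
          (laguerre α n).eval (x + y + t) =
      ∑ k ∈ Finset.range (n + 1),
        (laguerre α k).eval x * (laguerre α (n - k)).eval y := by
  have hpos : 0 < -α - 1 := by linarith
  have hΓ : Real.Gamma (-α - 1) ≠ 0 := ne_of_gt (Real.Gamma_pos_of_pos hpos)
  have heval : ∀ t : ℝ, t ^ (-α - 2) * Real.exp (-t) * (laguerre α n).eval (x + y + t) =
      ∑ p ∈ (range (n + 1)).sigma (fun k => range (k + 1)),
        lc α n p.1 * ((p.1.choose p.2 : ℝ) * (x + y) ^ (p.1 - p.2)) *
          (t ^ (-α - 2) * Real.exp (-t) * t ^ p.2) := by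
    intro t
    set s : ℝ := x + y with hs
    calc t ^ (-α - 2) * Real.exp (-t) * (laguerre α n).eval (s + t)
        = ∑ k ∈ range (n + 1), ∑ m ∈ range (k + 1),
            lc α n k * ((k.choose m : ℝ) * s ^ (k - m)) *
              (t ^ (-α - 2) * Real.exp (-t) * t ^ m) := by
          rw [laguerre_eval, show s + t = t + s by ring]
          simp only [add_pow, Finset.mul_sum]
          refine Finset.sum_congr rfl fun k _ => Finset.sum_congr rfl fun m _ => ?_
          ring
      _ = ∑ p ∈ (range (n + 1)).sigma (fun k => range (k + 1)),
            lc α n p.1 * ((p.1.choose p.2 : ℝ) * s ^ (p.1 - p.2)) *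
              (t ^ (-α - 2) * Real.exp (-t) * t ^ p.2) := by
          exact (Finset.sum_sigma (range (n + 1)) (fun k => range (k + 1)) (fun p =>
            lc α n p.1 * ((p.1.choose p.2 : ℝ) * s ^ (p.1 - p.2)) *
              (t ^ (-α - 2) * Real.exp (-t) * t ^ p.2))).symm
  have hInt : (∫ t in Set.Ioi (0:ℝ), t ^ (-α - 2) * Real.exp (-t) *
      (laguerre α n).eval (x + y + t)) =
      ∑ p ∈ (range (n + 1)).sigma (fun k => range (k + 1)),
        lc α n p.1 * ((p.1.choose p.2 : ℝ) * (x + y) ^ (p.1 - p.2)) *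
          Real.Gamma ((p.2 : ℝ) - α - 1) := by
    simp only [heval]
    rw [integral_finset_sum _ (fun p _ => ((Ig hα p.2).const_mul _))]
    refine Finset.sum_congr rfl fun p _ => ?_
    rw [integral_const_mul, Gval hα p.2]
  calc (1 / Real.Gamma (-α - 1)) *
        ∫ t in Set.Ioi (0 : ℝ), t ^ (-α - 2) * Real.exp (-t) *
          (laguerre α n).eval (x + y + t)
      = ∑ p ∈ (range (n + 1)).sigma (fun k => range (k + 1)),
          lc α n p.1 * ((p.1.choose p.2 : ℝ) * (x + y) ^ (p.1 - p.2)) *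
            (ascPochhammer ℝ p.2).eval (-α - 1) := by
        rw [hInt, Finset.mul_sum]
        refine Finset.sum_congr rfl fun p _ => ?_
        rw [gamma_ratio hα p.2]
        field_simp
    _ = ∑ k ∈ range (n + 1), ∑ m ∈ range (k + 1),
          lc α n k * ((k.choose m : ℝ) * (x + y) ^ (k - m)) *
            (ascPochhammer ℝ m).eval (-α - 1) := by
        exact Finset.sum_sigma (range (n + 1)) (fun k => range (k + 1)) (fun p =>
          lc α n p.1 * ((p.1.choose p.2 : ℝ) * (x + y) ^ (p.1 - p.2)) *
            (ascPochhammer ℝ p.2).eval (-α - 1))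
    _ = ∑ j ∈ range (n + 1), lc (2 * α + 1) n j * (x + y) ^ j := identB α n (x + y)
    _ = ∑ k ∈ range (n + 1),
          (∑ i ∈ range (k + 1), lc α k i * x ^ i) *
            (∑ j ∈ range (n - k + 1), lc α (n - k) j * y ^ j) := identA α n x y
    _ = ∑ k ∈ Finset.range (n + 1),
          (laguerre α k).eval x * (laguerre α (n - k)).eval y := by
        refine Finset.sum_congr rfl fun k _ => ?_
        rw [laguerre_eval, laguerre_eval]

end
end

section
/- For n ∈ ℕ define the Bernoulli polynomial of the second kind by b_n(x) = ∫_0^1 ( (x+t)(x+t−1)⋯(x+t−n+1) / n! ) dt (so b_0(x) = 1). Then for every n ∈ ℕ and all real x, y: ∫_x^{x+1} b_n(y+u) du = Σ_{k=0}^n b_k(x) b_{n−k}(y). -/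
open MeasureTheory intervalIntegral

noncomputable section

/-- The binomial polynomial as a function. -/
private def binomFn (k : ℕ) (z : ℝ) : ℝ :=
  (∏ j ∈ Finset.range k, (z - (j : ℝ))) / (Nat.factorial k : ℝ)

private lemma descPochhammer_smeval_eq_prod (k : ℕ) (z : ℝ) :
    (descPochhammer ℤ k).smeval z = ∏ j ∈ Finset.range k, (z - (j : ℝ)) := by
  induction k with
  | zero => simp
  | succ k ih =>
    rw [descPochhammer_succ_right, Finset.prod_range_succ, ← ih, Polynomial.smeval_mul]
    simp [Polynomial.smeval_sub, Polynomial.smeval_X, Polynomial.smeval_natCast]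

private lemma binomFn_continuous (k : ℕ) : Continuous (binomFn k) := by
  unfold binomFn
  exact (continuous_finset_prod _ fun j _ => continuous_id.sub continuous_const).div_const _

private lemma binomFn_comp_cont (k : ℕ) (c : ℝ) : Continuous fun t : ℝ => binomFn k (c + t) :=
  (binomFn_continuous k).comp (continuous_const.add continuous_id)

/-- Chu–Vandermonde for binomial polynomials over ℝ. -/
private lemma binomFn_add (n : ℕ) (z w : ℝ) :
    binomFn n (z + w) = ∑ k ∈ Finset.range (n + 1), binomFn k z * binomFn (n - k) w := by
  have h := Ring.descPochhammer_smeval_add (R := ℝ) (r := z) (s := w) n (Commute.all z w)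
  rw [Finset.Nat.sum_antidiagonal_eq_sum_range_succ_mk] at h
  simp only [descPochhammer_smeval_eq_prod] at h
  unfold binomFn
  rw [div_eq_iff (by exact_mod_cast (Nat.factorial_ne_zero n)), h, Finset.sum_mul]
  refine Finset.sum_congr rfl fun k hk => ?_
  have hkn : k ≤ n := Nat.lt_succ_iff.mp (Finset.mem_range.mp hk)
  have hfac : (Nat.choose n k : ℝ) * k.factorial * (n - k).factorial = n.factorial := by
    exact_mod_cast congrArg (Nat.cast : ℕ → ℝ)
      (Nat.choose_mul_factorial_mul_factorial hkn)
  have hk0 : (Nat.factorial k : ℝ) ≠ 0 := by exact_mod_cast Nat.factorial_ne_zero k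
  have hnk0 : (Nat.factorial (n - k) : ℝ) ≠ 0 := by exact_mod_cast Nat.factorial_ne_zero (n - k)
  field_simp
  rw [← hfac]
  ring

/-- The Bernoulli polynomial of the second kind:
`b_n(x) = ∫_0^1 binom(x+t, n) dt` where `binom(z, n) = z(z-1)⋯(z-n+1)/n!`. -/
def bernoulliSecond (n : ℕ) (x : ℝ) : ℝ :=
  ∫ t in (0 : ℝ)..1, (∏ j ∈ Finset.range n, (x + t - (j : ℝ))) / (Nat.factorial n : ℝ)

private lemma bernoulliSecond_eq (n : ℕ) (x : ℝ) :
    bernoulliSecond n x = ∫ t in (0:ℝ)..1, binomFn n (x + t) := rfl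

/-- Convolution identity for the Bernoulli polynomials of the second
kind: `∫_x^{x+1} b_n(y+u) du = ∑_{k=0}^n b_k(x) b_{n-k}(y)`. -/
theorem bernoulliSecond_convolution (n : ℕ) (x y : ℝ) :
    (∫ u in x..(x + 1), bernoulliSecond n (y + u)) =
      ∑ k ∈ Finset.range (n + 1), bernoulliSecond k x * bernoulliSecond (n - k) y := by
  have hcont : ∀ k : ℕ, Continuous (binomFn k) := binomFn_continuous
  -- substitution u = x + s
  have hsub : (∫ u in x..(x + 1), bernoulliSecond n (y + u)) =
      ∫ s in (0:ℝ)..1, bernoulliSecond n (y + (x + s)) := by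
    have := intervalIntegral.integral_comp_add_left
      (a := (0:ℝ)) (b := 1) (fun u => bernoulliSecond n (y + u)) x
    simpa using this.symm
  rw [hsub]
  have key : ∀ s : ℝ, bernoulliSecond n (y + (x + s)) =
      ∑ k ∈ Finset.range (n + 1), binomFn k (x + s) * bernoulliSecond (n - k) y := by
    intro s
    rw [show bernoulliSecond n (y + (x + s)) =
        ∫ t in (0:ℝ)..1, binomFn n ((x + s) + (y + t)) from by
      simp only [bernoulliSecond, binomFn]; congr 1; ext t; ring_nf]
    have : (fun t => binomFn n ((x + s) + (y + t))) =
        fun t => ∑ k ∈ Finset.range (n + 1), binomFn k (x + s) * binomFn (n - k) (y + t) := by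
      ext t; exact binomFn_add n (x + s) (y + t)
    rw [this, intervalIntegral.integral_finset_sum
      (f := fun k t => binomFn k (x + s) * binomFn (n - k) (y + t)) (fun k _ =>
      (continuous_const.mul (binomFn_comp_cont (n - k) y)).intervalIntegrable _ _)]
    refine Finset.sum_congr rfl fun k _ => ?_
    rw [intervalIntegral.integral_const_mul, bernoulliSecond_eq]
  simp only [key]
  rw [intervalIntegral.integral_finset_sum
    (f := fun k s => binomFn k (x + s) * bernoulliSecond (n - k) y) (fun k _ =>
    ((binomFn_comp_cont k x).mul continuous_const).intervalIntegrable _ _)]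
  refine Finset.sum_congr rfl fun k _ => ?_
  rw [intervalIntegral.integral_mul_const, ← bernoulliSecond_eq]

end
end

section
/- Let (p_n)_{n∈ℕ} be a sequence of polynomials in K[x] with deg p_n = n, and let Q be the unique K-linear operator on K[x] with Q p_0 = 0 and Q p_n = p_{n−1} for n ≥ 1. Then there exists a unique sequence (q_n)_{n∈ℕ} of polynomials in K[x] such that q_n(0) = δ_{n0} for all n, Q q_0 = 0, and Q q_n = q_{n−1} for all n ≥ 1; moreover deg q_n = n for all n. -/
open Polynomial

section Aux

variable {K : Type*} [Field K]

lemma aux_wb_lt_succ {a : WithBot ℕ} {n : ℕ} :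
    a < ((n + 1 : ℕ) : WithBot ℕ) ↔ a ≤ (n : WithBot ℕ) := by
  cases a with
  | bot =>
    simp only [bot_le, iff_true, Nat.cast_withBot]
    exact WithBot.bot_lt_coe _
  | coe m =>
    rw [Nat.cast_withBot, Nat.cast_withBot, WithBot.coe_lt_coe, WithBot.coe_le_coe]
    exact Nat.lt_succ_iff

/-- Decomposition: strip off the top `p n` component. -/
lemma aux_decomp (p : ℕ → Polynomial K) (hpdeg : ∀ n, (p n).degree = n)
    (n : ℕ) (f : Polynomial K) (hf : f.degree ≤ n) :
    (f - (f.coeff n / (p n).coeff n) • p n).degree < n := by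
  set c : K := f.coeff n / (p n).coeff n with hc
  have hcn : (p n).coeff n ≠ 0 := coeff_ne_zero_of_eq_degree (hpdeg n)
  have h1 : (f - c • p n).coeff n = 0 := by
    simp [hc, coeff_smul, smul_eq_mul, div_mul_cancel₀ _ hcn]
  have h2 : (f - c • p n).degree ≤ n :=
    le_trans (degree_sub_le _ _)
      (max_le hf (le_trans (degree_smul_le _ _) (le_of_eq (hpdeg n))))
  rcases lt_or_eq_of_le h2 with h | h
  · exact h
  · exact absurd h1 (coeff_ne_zero_of_eq_degree h)

/-- `Q` strictly lowers degree. -/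
lemma aux_deg_lt (p : ℕ → Polynomial K) (hpdeg : ∀ n, (p n).degree = n)
    (Q : Polynomial K →ₗ[K] Polynomial K)
    (hQ0 : Q (p 0) = 0) (hQ : ∀ n, Q (p (n + 1)) = p n) :
    ∀ n : ℕ, ∀ f : Polynomial K, f.degree ≤ n → (Q f).degree < n := by
  intro n
  induction n with
  | zero =>
    intro f hf
    have hp0 : p 0 = C ((p 0).coeff 0) := eq_C_of_degree_le_zero (le_of_eq (hpdeg 0))
    have hc0 : (p 0).coeff 0 ≠ 0 := coeff_ne_zero_of_eq_degree (hpdeg 0)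
    have hf' : f = (f.coeff 0 / (p 0).coeff 0) • p 0 := by
      conv_lhs => rw [eq_C_of_degree_le_zero hf]
      conv_rhs => rw [hp0]
      rw [smul_C, smul_eq_mul, coeff_C_zero, div_mul_cancel₀ _ hc0]
    rw [hf', map_smul, hQ0, smul_zero, degree_zero]
    exact bot_lt_iff_ne_bot.2 (by simp)
  | succ n ih =>
    intro f hf
    set c : K := f.coeff (n+1) / (p (n+1)).coeff (n+1) with hc
    have hr : (f - c • p (n+1)).degree < ((n+1 : ℕ) : WithBot ℕ) :=
      aux_decomp p hpdeg (n+1) f hf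
    have hrle : (f - c • p (n+1)).degree ≤ (n : WithBot ℕ) := aux_wb_lt_succ.1 hr
    have hQr : (Q (f - c • p (n+1))).degree < (n : WithBot ℕ) := ih _ hrle
    have hQf : Q f = c • p n + Q (f - c • p (n+1)) := by
      rw [map_sub, map_smul, hQ n]; ring
    rw [hQf]
    have h1 : (c • p n).degree < ((n+1 : ℕ) : WithBot ℕ) := by
      refine lt_of_le_of_lt (le_trans (degree_smul_le _ _) (le_of_eq (hpdeg n))) ?_
      exact_mod_cast Nat.lt_succ_self n
    have h2 : (Q (f - c • p (n+1))).degree < ((n+1 : ℕ) : WithBot ℕ) :=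
      lt_trans hQr (by exact_mod_cast Nat.lt_succ_self n)
    exact lt_of_le_of_lt (degree_add_le _ _) (max_lt h1 h2)

/-- Kernel of `Q` consists of constants. -/
lemma aux_ker (p : ℕ → Polynomial K) (hpdeg : ∀ n, (p n).degree = n)
    (Q : Polynomial K →ₗ[K] Polynomial K)
    (hQ0 : Q (p 0) = 0) (hQ : ∀ n, Q (p (n + 1)) = p n)
    (f : Polynomial K) (hf : Q f = 0) : f.degree ≤ 0 := by
  by_contra hcon
  push_neg at hcon
  have hf0 : f ≠ 0 := by rintro rfl; simp at hcon
  have hnd : 0 < f.natDegree := natDegree_pos_iff_degree_pos.2 hcon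
  obtain ⟨m, hm⟩ : ∃ m, f.natDegree = m + 1 :=
    ⟨f.natDegree - 1, (Nat.succ_pred_eq_of_pos hnd).symm⟩
  have hdeg : f.degree = ((m + 1 : ℕ) : WithBot ℕ) := by
    rw [degree_eq_natDegree hf0, hm]
  set c : K := f.coeff (m+1) / (p (m+1)).coeff (m+1) with hc
  have hcne : c ≠ 0 := by
    have h1 : f.coeff (m+1) ≠ 0 := coeff_ne_zero_of_eq_degree hdeg
    have h2 : (p (m+1)).coeff (m+1) ≠ 0 := coeff_ne_zero_of_eq_degree (hpdeg (m+1))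
    exact div_ne_zero h1 h2
  have hr : (f - c • p (m+1)).degree < ((m+1 : ℕ) : WithBot ℕ) :=
    aux_decomp p hpdeg (m+1) f (le_of_eq hdeg)
  have hrle : (f - c • p (m+1)).degree ≤ (m : WithBot ℕ) := aux_wb_lt_succ.1 hr
  have hQr : (Q (f - c • p (m+1))).degree < (m : WithBot ℕ) :=
    aux_deg_lt p hpdeg Q hQ0 hQ m _ hrle
  have heq : c • p m = -Q (f - c • p (m+1)) := by
    have : Q f = c • p m + Q (f - c • p (m+1)) := by
      rw [map_sub, map_smul, hQ m]; ring
    rw [hf] at this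
    linear_combination (norm := module) -this
  have hdm : (c • p m).degree = (m : WithBot ℕ) := by
    rw [smul_eq_C_mul, degree_C_mul hcne, hpdeg m]
  rw [heq, degree_neg] at hdm
  exact absurd hdm (ne_of_lt hQr)

/-- `Q` lowers degree by exactly one. -/
lemma aux_deg_step (p : ℕ → Polynomial K) (hpdeg : ∀ n, (p n).degree = n)
    (Q : Polynomial K →ₗ[K] Polynomial K)
    (hQ0 : Q (p 0) = 0) (hQ : ∀ n, Q (p (n + 1)) = p n)
    (f : Polynomial K) (m : ℕ) (hf : f.degree = ((m + 1 : ℕ) : WithBot ℕ)) :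
    (Q f).degree = (m : WithBot ℕ) := by
  set c : K := f.coeff (m+1) / (p (m+1)).coeff (m+1) with hc
  have hcne : c ≠ 0 := by
    have h1 : f.coeff (m+1) ≠ 0 := coeff_ne_zero_of_eq_degree hf
    have h2 : (p (m+1)).coeff (m+1) ≠ 0 := coeff_ne_zero_of_eq_degree (hpdeg (m+1))
    exact div_ne_zero h1 h2
  have hr : (f - c • p (m+1)).degree < ((m+1 : ℕ) : WithBot ℕ) :=
    aux_decomp p hpdeg (m+1) f (le_of_eq hf)
  have hrle : (f - c • p (m+1)).degree ≤ (m : WithBot ℕ) := aux_wb_lt_succ.1 hr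
  have hQr : (Q (f - c • p (m+1))).degree < (m : WithBot ℕ) :=
    aux_deg_lt p hpdeg Q hQ0 hQ m _ hrle
  have hQf : Q f = c • p m + Q (f - c • p (m+1)) := by
    rw [map_sub, map_smul, hQ m]; ring
  have hdm : (c • p m).degree = (m : WithBot ℕ) := by
    rw [smul_eq_C_mul, degree_C_mul hcne, hpdeg m]
  rw [hQf, degree_add_eq_left_of_degree_lt (by rw [hdm]; exact hQr), hdm]

/-- `Q` is surjective. -/
lemma aux_surj (p : ℕ → Polynomial K) (hpdeg : ∀ n, (p n).degree = n)
    (Q : Polynomial K →ₗ[K] Polynomial K)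
    (hQ0 : Q (p 0) = 0) (hQ : ∀ n, Q (p (n + 1)) = p n) :
    ∀ n : ℕ, ∀ f : Polynomial K, f.degree ≤ n → ∃ g, Q g = f := by
  intro n
  induction n with
  | zero =>
    intro f hf
    have hp0 : p 0 = C ((p 0).coeff 0) := eq_C_of_degree_le_zero (le_of_eq (hpdeg 0))
    have hc0 : (p 0).coeff 0 ≠ 0 := coeff_ne_zero_of_eq_degree (hpdeg 0)
    refine ⟨(f.coeff 0 / (p 0).coeff 0) • p 1, ?_⟩
    rw [map_smul, hQ 0]
    conv_rhs => rw [eq_C_of_degree_le_zero hf]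
    conv_lhs => rw [hp0]
    rw [smul_C, smul_eq_mul, coeff_C_zero, div_mul_cancel₀ _ hc0]
  | succ n ih =>
    intro f hf
    set c : K := f.coeff (n+1) / (p (n+1)).coeff (n+1) with hc
    have hr : (f - c • p (n+1)).degree < ((n+1 : ℕ) : WithBot ℕ) :=
      aux_decomp p hpdeg (n+1) f hf
    obtain ⟨g', hg'⟩ := ih _ (aux_wb_lt_succ.1 hr)
    refine ⟨c • p (n+2) + g', ?_⟩
    rw [map_add, map_smul, hQ (n+1), hg']
    ring

/-- Surjectivity with prescribed value at `0`. -/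
lemma aux_surj0 (p : ℕ → Polynomial K) (hpdeg : ∀ n, (p n).degree = n)
    (Q : Polynomial K →ₗ[K] Polynomial K)
    (hQ0 : Q (p 0) = 0) (hQ : ∀ n, Q (p (n + 1)) = p n)
    (f : Polynomial K) : ∃ g, Q g = f ∧ g.eval 0 = 0 := by
  obtain ⟨m, hm⟩ : ∃ m : ℕ, f.degree ≤ m := ⟨f.natDegree, degree_le_natDegree⟩
  obtain ⟨g, hg⟩ := aux_surj p hpdeg Q hQ0 hQ m f hm
  have he0 : (p 0).eval 0 ≠ 0 := by
    rw [← coeff_zero_eq_eval_zero]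
    exact coeff_ne_zero_of_eq_degree (hpdeg 0)
  refine ⟨g - (g.eval 0 / (p 0).eval 0) • p 0, ?_, ?_⟩
  · rw [map_sub, map_smul, hQ0, smul_zero, sub_zero, hg]
  · rw [eval_sub, eval_smul, smul_eq_mul, div_mul_cancel₀ _ he0, sub_self]

end Aux

/-- Given a polynomial sequence `(p_n)` (`deg p_n = n`) and the linear
operator `Q` with `Q p_0 = 0` and `Q p_{n+1} = p_n`, there exists a unique sequence
`(q_n)` with `q_n(0) = δ_{n0}`, `Q q_0 = 0` and `Q q_{n+1} = q_n`; moreover any such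
sequence satisfies `deg q_n = n` for all `n`. -/
theorem basic_sequence_exists_unique {K : Type*} [Field K] [CharZero K]
    (p : ℕ → Polynomial K) (hpdeg : ∀ n, (p n).degree = n)
    (Q : Polynomial K →ₗ[K] Polynomial K)
    (hQ0 : Q (p 0) = 0) (hQ : ∀ n, Q (p (n + 1)) = p n) :
    (∃! q : ℕ → Polynomial K,
      (∀ n, (q n).eval 0 = if n = 0 then 1 else 0) ∧
        Q (q 0) = 0 ∧ ∀ n, Q (q (n + 1)) = q n) ∧
    (∀ q : ℕ → Polynomial K,
      ((∀ n, (q n).eval 0 = if n = 0 then 1 else 0) ∧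
        Q (q 0) = 0 ∧ ∀ n, Q (q (n + 1)) = q n) →
      ∀ n, (q n).degree = n) := by
  have hc0 : (p 0).coeff 0 ≠ 0 := coeff_ne_zero_of_eq_degree (hpdeg 0)
  have he0 : (p 0).eval 0 = (p 0).coeff 0 := (coeff_zero_eq_eval_zero _).symm
  -- uniqueness helper: kernel + value at 0 determines elements
  have huniq : ∀ f : Polynomial K, Q f = 0 → f.eval 0 = 0 → f = 0 := by
    intro f hQf hev
    have hdeg := aux_ker p hpdeg Q hQ0 hQ f hQf
    rw [eq_C_of_degree_le_zero hdeg, coeff_zero_eq_eval_zero, hev, map_zero]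
  constructor
  · -- existence and uniqueness
    choose qf hqf1 hqf2 using aux_surj0 p hpdeg Q hQ0 hQ
    set q : ℕ → Polynomial K :=
      fun n => Nat.rec (((p 0).coeff 0)⁻¹ • p 0) (fun _ prev => qf prev) n with hqdef
    have hq0 : q 0 = ((p 0).coeff 0)⁻¹ • p 0 := rfl
    have hqs : ∀ n, q (n + 1) = qf (q n) := fun n => rfl
    refine ⟨q, ⟨?_, ?_, ?_⟩, ?_⟩
    · intro n
      cases n with
      | zero =>
        rw [if_pos rfl, hq0, eval_smul, smul_eq_mul, he0, inv_mul_cancel₀ hc0]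
      | succ n =>
        rw [hqs n, hqf2]
        simp
    · rw [hq0, map_smul, hQ0, smul_zero]
    · intro n; rw [hqs n, hqf1]
    · -- uniqueness
      rintro q' ⟨hev', hq0', hqs'⟩
      funext n
      induction n with
      | zero =>
        have h1 : Q (q' 0 - q 0) = 0 := by
          rw [map_sub, hq0', hq0, map_smul, hQ0, smul_zero, sub_zero]
        have h2 : (q' 0 - q 0).eval 0 = 0 := by
          have e1 := hev' 0
          rw [if_pos rfl] at e1
          rw [eval_sub, e1, hq0, eval_smul, smul_eq_mul, he0, inv_mul_cancel₀ hc0, sub_self]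
        exact sub_eq_zero.1 (huniq _ h1 h2)
      | succ n ih =>
        have h1 : Q (q' (n+1) - q (n+1)) = 0 := by
          rw [map_sub, hqs' n, hqs n, hqf1, ih, sub_self]
        have h2 : (q' (n+1) - q (n+1)).eval 0 = 0 := by
          have e1 := hev' (n+1)
          rw [if_neg (Nat.succ_ne_zero n)] at e1
          rw [eval_sub, e1, hqs n, hqf2, sub_self]
        exact sub_eq_zero.1 (huniq _ h1 h2)
  · -- degrees
    rintro q ⟨hev, hq0, hqs⟩ n
    induction n with
    | zero =>
      have hdeg := aux_ker p hpdeg Q hQ0 hQ _ hq0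
      have hne : (q 0).coeff 0 ≠ 0 := by
        rw [coeff_zero_eq_eval_zero, hev 0, if_pos rfl]
        exact one_ne_zero
      rw [eq_C_of_degree_le_zero hdeg]
      exact (degree_C hne).trans (by simp)
    | succ n ih =>
      have hne : q (n+1) ≠ 0 := by
        intro h
        have : q n = 0 := by rw [← hqs n, h, map_zero]
        rw [this, degree_zero] at ih
        exact absurd ih.symm (by simp)
      have hgt : ¬ (q (n+1)).degree ≤ (n : WithBot ℕ) := by
        intro h
        have := aux_deg_lt p hpdeg Q hQ0 hQ n _ h
        rw [hqs n, ih] at this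
        exact lt_irrefl _ this
      have hnd : n + 1 ≤ (q (n+1)).natDegree := by
        by_contra h
        push_neg at h
        exact hgt (degree_le_of_natDegree_le (Nat.lt_succ_iff.1 h) |>.trans (le_refl _))
      obtain ⟨m, hm⟩ : ∃ m, (q (n+1)).natDegree = m + 1 :=
        ⟨(q (n+1)).natDegree - 1, (Nat.succ_pred_eq_of_pos (by omega)).symm⟩
      have hdeg : (q (n+1)).degree = ((m+1 : ℕ) : WithBot ℕ) := by
        rw [degree_eq_natDegree hne, hm]
      have := aux_deg_step p hpdeg Q hQ0 hQ _ m hdeg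
      rw [hqs n, ih] at this
      have hmn : m = n := by exact_mod_cast this.symm
      rw [hdeg, hmn]
end

section
/- Let (p_n)_{n∈ℕ} be a sequence of polynomials in K[x] with deg p_n = n. Let Q be the unique K-linear operator on K[x] with Q p_0 = 0 and Q p_n = p_{n−1} for n ≥ 1; let (q_n) be the unique sequence with q_n(0) = δ_{n0}, Q q_0 = 0, Q q_n = q_{n−1} (n ≥ 1); let P be the K-linear operator on K[x] with P q_n = p_n; and let G^{(y)} : K[x] → K[x,y] be defined by G^{(y)} p = Σ_{k=0}^{deg p} q_k(y) · (Q^k p). Then F := P_y ∘ G^{(y)} is the unique K-linear map from K[x] to K[x,y] satisfying F p_n(x) = Σ_{k=0}^n p_k(x) p_{n−k}(y) for all n. -/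
open Polynomial

noncomputable section

/-- The generalized translation operator `G^{(y)} : K[x] → K[x,y]`,
`G^{(y)} p = ∑_{k=0}^{deg p} q_k(y) · (Q^k p)`.  Here `K[x,y]` is represented as
`(K[x])[y]` (inner variable `x`, outer variable `y`). -/
def genTranslation {K : Type*} [CommRing K] (q : ℕ → Polynomial K)
    (Q : Polynomial K →ₗ[K] Polynomial K) (p : Polynomial K) :
    Polynomial (Polynomial K) :=
  ∑ k ∈ Finset.range (p.natDegree + 1), (q k).map C * C ((Q ^ k) p)

section helpers

variable {K : Type*} [Field K]

lemma applyY_zero (P : Polynomial K → Polynomial K) : applyY P 0 = 0 := by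
  simp [applyY]

lemma applyY_add (P : Polynomial K → Polynomial K) (u v : Polynomial (Polynomial K)) :
    applyY P (u + v) = applyY P u + applyY P v := by
  unfold applyY
  rw [Polynomial.sum_add_index] <;> intros <;> simp [add_mul]

lemma applyY_sum {ι : Type*} (P : Polynomial K → Polynomial K) (s : Finset ι)
    (f : ι → Polynomial (Polynomial K)) :
    applyY P (∑ i ∈ s, f i) = ∑ i ∈ s, applyY P (f i) := by
  classical
  induction s using Finset.induction with
  | empty => simp [applyY_zero]
  | @insert a s h ih => rw [Finset.sum_insert h, Finset.sum_insert h, applyY_add, ih]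

lemma applyY_monomial (P : Polynomial K → Polynomial K) (n : ℕ) (b : Polynomial K) :
    applyY P (Polynomial.monomial n b) = C b * (P (X ^ n)).map C := by
  unfold applyY
  rw [Polynomial.sum_monomial_index]
  simp

lemma applyY_map_C_mul (P : Polynomial K →ₗ[K] Polynomial K) (f g : Polynomial K) :
    applyY (⇑P) (f.map C * C g) = (P f).map C * C g := by
  induction f using Polynomial.induction_on' with
  | add u v hu hv =>
      rw [Polynomial.map_add, add_mul, applyY_add, hu, hv, map_add, Polynomial.map_add, add_mul]
  | monomial n a =>
      rw [Polynomial.map_monomial, Polynomial.monomial_mul_C, applyY_monomial]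
      have hPa : P (C a * X ^ n) = C a * P (X ^ n) := by
        rw [← Polynomial.smul_eq_C_mul, ← Polynomial.smul_eq_C_mul, map_smul]
      rw [← Polynomial.C_mul_X_pow_eq_monomial, hPa, Polynomial.map_mul, Polynomial.map_C,
        map_mul]
      ring

lemma mem_span_aux (p : ℕ → Polynomial K) (hpdeg : ∀ n, (p n).degree = n) :
    ∀ (n : ℕ) (f : Polynomial K), f.degree < (n : ℕ) →
      f ∈ Submodule.span K (p '' Set.Iio n) := by
  intro n
  induction n with
  | zero =>
      intro f hf
      have : f = 0 := by
        rw [← Polynomial.degree_eq_bot]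
        simpa using hf
      simp [this]
  | succ n ih =>
      intro f hf
      by_cases h0 : f = 0
      · simp [h0]
      by_cases hd : f.degree < (n : ℕ)
      · exact Submodule.span_mono
          (Set.image_mono (Set.Iio_subset_Iio (Nat.le_succ n))) (ih f hd)
      · have hnd : f.natDegree = n := by
          have h1 : f.natDegree < n + 1 := by
            rw [Polynomial.natDegree_lt_iff_degree_lt h0]
            exact_mod_cast hf
          have h2 : ¬ f.natDegree < n := by
            rw [Polynomial.natDegree_lt_iff_degree_lt h0]
            exact hd
          omega
        have hdeg : f.degree = (n : ℕ) := by
          rw [Polynomial.degree_eq_natDegree h0, hnd]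
        have hpn0 : p n ≠ 0 := by
          intro h
          have := hpdeg n
          rw [h] at this
          simp at this
        have hlcp : (p n).leadingCoeff ≠ 0 := leadingCoeff_ne_zero.2 hpn0
        set c : K := f.leadingCoeff / (p n).leadingCoeff with hc
        have hc0 : c ≠ 0 := div_ne_zero (leadingCoeff_ne_zero.2 h0) hlcp
        have hdeg2 : degree (C c * p n) = (n : ℕ) := by
          rw [Polynomial.degree_C_mul (by exact hc0), hpdeg n]
        have hlc2 : (C c * p n).leadingCoeff = f.leadingCoeff := by
          rw [Polynomial.leadingCoeff_mul, Polynomial.leadingCoeff_C, hc,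
            div_mul_cancel₀ _ hlcp]
        have hsub : (f - C c * p n).degree < (n : ℕ) := by
          calc (f - C c * p n).degree < f.degree :=
                Polynomial.degree_sub_lt (by rw [hdeg, hdeg2]) h0 hlc2.symm
            _ = (n : ℕ) := hdeg
        have hmem : f - C c * p n ∈ Submodule.span K (p '' Set.Iio (n + 1)) :=
          Submodule.span_mono
            (Set.image_mono (Set.Iio_subset_Iio (Nat.le_succ n))) (ih _ hsub)
        have hpmem : p n ∈ Submodule.span K (p '' Set.Iio (n + 1)) :=
          Submodule.subset_span ⟨n, Nat.lt_succ_self n, rfl⟩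
        have : f = (f - C c * p n) + c • p n := by
          rw [Polynomial.smul_eq_C_mul]; ring
        rw [this]
        exact Submodule.add_mem _ hmem (Submodule.smul_mem _ _ hpmem)

lemma Qpow_p (p : ℕ → Polynomial K) (Q : Polynomial K →ₗ[K] Polynomial K)
    (hQ : ∀ n, Q (p (n + 1)) = p n) :
    ∀ n k, k ≤ n → (Q ^ k) (p n) = p (n - k) := by
  intro n k
  induction k with
  | zero => simp
  | succ k ih =>
      intro hk
      rw [pow_succ', Module.End.mul_apply, ih (by omega)]
      have h : n - k = (n - (k + 1)) + 1 := by omega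
      rw [h, hQ]

lemma Qpow_zero (p : ℕ → Polynomial K) (hpdeg : ∀ n, (p n).degree = n)
    (Q : Polynomial K →ₗ[K] Polynomial K)
    (hQ0 : Q (p 0) = 0) (hQ : ∀ n, Q (p (n + 1)) = p n) :
    ∀ (k : ℕ) (f : Polynomial K), f.degree < (k : ℕ) → (Q ^ k) f = 0 := by
  intro k f hf
  have hmem := mem_span_aux p hpdeg k f hf
  have hle : Submodule.span K (p '' Set.Iio k) ≤ LinearMap.ker (Q ^ k) := by
    rw [Submodule.span_le]
    rintro _ ⟨m, hm, rfl⟩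
    simp only [SetLike.mem_coe, LinearMap.mem_ker]
    have hmk : m < k := hm
    have e : k = (k - (m + 1)) + (m + 1) := by omega
    rw [e, pow_add, Module.End.mul_apply, pow_succ', Module.End.mul_apply,
      Qpow_p p Q hQ m m le_rfl, Nat.sub_self, hQ0, map_zero]
  exact hle hmem

lemma genTranslation_ext (p : ℕ → Polynomial K) (hpdeg : ∀ n, (p n).degree = n)
    (q : ℕ → Polynomial K) (Q : Polynomial K →ₗ[K] Polynomial K)
    (hQ0 : Q (p 0) = 0) (hQ : ∀ n, Q (p (n + 1)) = p n)
    (f : Polynomial K) (N : ℕ) (hN : f.natDegree ≤ N) :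
    genTranslation q Q f = ∑ k ∈ Finset.range (N + 1), (q k).map C * C ((Q ^ k) f) := by
  rw [genTranslation]
  apply Finset.sum_subset
  · intro x hx
    simp only [Finset.mem_range] at hx ⊢
    omega
  · intro k hk hk2
    simp only [Finset.mem_range, not_lt] at hk2
    have hz : (Q ^ k) f = 0 := by
      apply Qpow_zero p hpdeg Q hQ0 hQ
      rcases eq_or_ne f 0 with h | h
      · rw [h, Polynomial.degree_zero]
        exact_mod_cast WithBot.bot_lt_coe k
      · rw [Polynomial.degree_eq_natDegree h]
        exact_mod_cast (by omega : f.natDegree < k)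
    rw [hz]
    simp

end helpers

/-- **Generalized Sheffer theorem.**  With `(p_n)`, `Q`, `(q_n)`, `P` and
`G^{(y)}` as in the generalized Sheffer setup, `F := P_y ∘ G^{(y)}` is the unique linear
map `K[x] → K[x,y]` satisfying `F p_n(x) = ∑_{k=0}^n p_k(x) p_{n-k}(y)`. -/
theorem generalized_sheffer {K : Type*} [Field K] [CharZero K]
    (p : ℕ → Polynomial K) (hpdeg : ∀ n, (p n).degree = n)
    (Q : Polynomial K →ₗ[K] Polynomial K)
    (hQ0 : Q (p 0) = 0) (hQ : ∀ n, Q (p (n + 1)) = p n)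
    (q : ℕ → Polynomial K)
    (hq0 : ∀ n, (q n).eval 0 = if n = 0 then 1 else 0)
    (hQq0 : Q (q 0) = 0) (hQq : ∀ n, Q (q (n + 1)) = q n)
    (P : Polynomial K →ₗ[K] Polynomial K)
    (hP : ∀ n, P (q n) = p n) :
    (∀ n, applyY (⇑P) (genTranslation q Q (p n)) =
        ∑ k ∈ Finset.range (n + 1), C (p k) * (p (n - k)).map C) ∧
    (∀ F : Polynomial K →ₗ[K] Polynomial (Polynomial K),
      (∀ n, F (p n) = ∑ k ∈ Finset.range (n + 1), C (p k) * (p (n - k)).map C) →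
      ∀ pl : Polynomial K, F pl = applyY (⇑P) (genTranslation q Q pl)) := by
  have hnatdeg : ∀ n, (p n).natDegree = n := fun n =>
    natDegree_eq_of_degree_eq_some (hpdeg n)
  have part1 : ∀ n, applyY (⇑P) (genTranslation q Q (p n)) =
      ∑ k ∈ Finset.range (n + 1), C (p k) * (p (n - k)).map C := by
    intro n
    have h1 : applyY (⇑P) (genTranslation q Q (p n)) =
        ∑ k ∈ Finset.range (n + 1), (p k).map C * C (p (n - k)) := by
      rw [genTranslation, hnatdeg n, applyY_sum]
      refine Finset.sum_congr rfl fun k hk => ?_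
      rw [applyY_map_C_mul, hP k,
        Qpow_p p Q hQ n k (Nat.lt_succ_iff.mp (Finset.mem_range.mp hk))]
    rw [h1]
    conv_rhs => rw [← Finset.sum_range_reflect]
    refine Finset.sum_congr rfl fun j hj => ?_
    have hj' : j ≤ n := Nat.lt_succ_iff.mp (Finset.mem_range.mp hj)
    rw [show n + 1 - 1 - j = n - j from by omega, show n - (n - j) = j from by omega,
      mul_comm]
  refine ⟨part1, ?_⟩
  intro F hF pl
  set N := pl.natDegree with hN
  let GN : Polynomial K →ₗ[K] Polynomial (Polynomial K) :=
    { toFun := fun f => ∑ k ∈ Finset.range (N + 1), (P (q k)).map C * C ((Q ^ k) f)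
      map_add' := by
        intro a b
        simp [map_add, mul_add, Finset.sum_add_distrib]
      map_smul' := by
        intro c a
        simp only [map_smul, RingHom.id_apply]
        rw [Finset.smul_sum]
        refine Finset.sum_congr rfl fun k _ => ?_
        rw [← Polynomial.smul_C, mul_smul_comm] }
  have hGN : ∀ f : Polynomial K, f.natDegree ≤ N →
      applyY (⇑P) (genTranslation q Q f) = GN f := by
    intro f hf
    rw [genTranslation_ext p hpdeg q Q hQ0 hQ f N hf, applyY_sum]
    exact Finset.sum_congr rfl fun k _ => applyY_map_C_mul P (q k) _
  have hker : Submodule.span K (p '' Set.Iio (N + 1)) ≤ LinearMap.ker (F - GN) := by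
    rw [Submodule.span_le]
    rintro _ ⟨m, hm, rfl⟩
    simp only [SetLike.mem_coe, LinearMap.mem_ker, LinearMap.sub_apply, sub_eq_zero]
    rw [hF m, ← part1 m, hGN (p m) (by rw [hnatdeg m]; exact Nat.lt_succ_iff.mp hm)]
  have hpl : pl ∈ Submodule.span K (p '' Set.Iio (N + 1)) := by
    apply mem_span_aux p hpdeg
    calc pl.degree ≤ (pl.natDegree : WithBot ℕ) := Polynomial.degree_le_natDegree
      _ < ((N + 1 : ℕ) : WithBot ℕ) := by exact_mod_cast Nat.lt_succ_self N
  have h0 : F pl - GN pl = 0 := hker hpl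
  have hFG : F pl = GN pl := by rwa [sub_eq_zero] at h0
  rw [hFG, hGN pl le_rfl]

end
end

section
/- Let (q_n)_{n∈ℕ} be a sequence of polynomials in K[x] with deg q_n = n and q_n(0) = δ_{n0}, let Q be the K-linear operator with Q q_0 = 0 and Q q_n = q_{n−1} (n ≥ 1), and let G^{(y)} : K[x] → K[x,y] be defined by G^{(y)} p = Σ_{k=0}^{deg p} q_k(y) · (Q^k p). Then for every n ≥ 1, the derivative with respect to y of G^{(y)} q_n(x), evaluated at y = 0, equals Σ_{k=1}^n q_k'(0) · q_{n−k}(x); equivalently, the infinitesimal generator of the family G^{(y)} is the operator Σ_{k=0}^∞ q_k'(0) Q^k. -/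
open Polynomial

noncomputable section

/-- The infinitesimal generator of the family `G^{(y)}`: for `n ≥ 1`,
the `y`-derivative of `G^{(y)} q_n(x)` at `y = 0` equals `∑_{k=1}^n q_k'(0) q_{n-k}(x)`,
which is `(∑_{k=0}^∞ q_k'(0) Q^k) q_n(x)`. -/
theorem genTranslation_infinitesimal_generator {K : Type*} [Field K] [CharZero K]
    (q : ℕ → Polynomial K) (hqdeg : ∀ n, (q n).degree = n)
    (hq0 : ∀ n, (q n).eval 0 = if n = 0 then 1 else 0)
    (Q : Polynomial K →ₗ[K] Polynomial K)
    (hQ0 : Q (q 0) = 0) (hQ : ∀ n, Q (q (n + 1)) = q n) :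
    ∀ n : ℕ, 1 ≤ n →
      Polynomial.eval 0 (Polynomial.derivative (genTranslation q Q (q n))) =
          ∑ k ∈ Finset.Icc 1 n, (Polynomial.derivative (q k)).eval 0 • q (n - k) ∧
      Polynomial.eval 0 (Polynomial.derivative (genTranslation q Q (q n))) =
          ∑ k ∈ Finset.range (n + 1),
            (Polynomial.derivative (q k)).eval 0 • ((Q ^ k) (q n)) := by
  -- Q^k (q n) = q (n - k) for k ≤ n
  have hpow : ∀ k n : ℕ, k ≤ n → (Q ^ k) (q n) = q (n - k) := by
    intro k
    induction k with
    | zero => intro n _; simp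
    | succ k ih =>
      intro n hk
      obtain ⟨m, rfl⟩ : ∃ m, n = m + 1 := ⟨n - 1, by omega⟩
      have : (Q ^ (k + 1)) (q (m + 1)) = (Q ^ k) (Q (q (m + 1))) := by
        rw [pow_succ, Module.End.mul_apply]
      rw [this, hQ, ih m (by omega)]
      congr 1
      omega
  have hnd : ∀ n, (q n).natDegree = n := fun n =>
    natDegree_eq_of_degree_eq_some (hqdeg n)
  intro n hn
  -- compute eval 0 of derivative of genTranslation
  have key : Polynomial.eval 0 (Polynomial.derivative (genTranslation q Q (q n))) =
      ∑ k ∈ Finset.range (n + 1),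
        (Polynomial.derivative (q k)).eval 0 • ((Q ^ k) (q n)) := by
    unfold genTranslation
    rw [hnd n, map_sum, Polynomial.eval_finset_sum]
    refine Finset.sum_congr rfl ?_
    intro k _
    rw [Polynomial.derivative_mul, Polynomial.derivative_C, mul_zero, add_zero,
      Polynomial.eval_mul, Polynomial.eval_C, Polynomial.derivative_map,
      Polynomial.eval_map, Polynomial.eval₂_at_zero, Polynomial.coeff_zero_eq_eval_zero,
      Polynomial.smul_eq_C_mul]
  refine ⟨?_, key⟩
  rw [key]
  have hins : Finset.range (n + 1) = insert 0 (Finset.Icc 1 n) := by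
    ext m
    simp only [Finset.mem_range, Finset.mem_insert, Finset.mem_Icc]
    omega
  rw [hins, Finset.sum_insert (by simp)]
  have hd0 : Polynomial.derivative (q 0) = 0 := by
    have : (q 0).natDegree = 0 := hnd 0
    obtain ⟨c, hc⟩ := Polynomial.natDegree_eq_zero.mp this
    rw [← hc, Polynomial.derivative_C]
  rw [hd0]
  simp only [Polynomial.eval_zero, zero_smul, zero_add]
  refine Finset.sum_congr rfl ?_
  intro k hk
  rw [hpow k n (Finset.mem_Icc.mp hk).2]

end
end

section
/- Let Q be a shift-invariant K-linear operator on K[x] and let (q_n)_{n∈ℕ} be a sequence of polynomials with deg q_n = n, q_n(0) = δ_{n0}, Q q_0 = 0 and Q q_n = q_{n−1} for n ≥ 1. Then Σ_{k=0}^∞ q_k'(0) Q^k = D as operators on K[x]; that is, for every p ∈ K[x], Σ_{k=0}^{deg p} q_k'(0) · (Q^k p) equals the derivative p'. -/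
open Polynomial

noncomputable section

/-- If `Q` is a shift-invariant operator with basic sequence `(q_n)`
(`deg q_n = n`, `q_n(0) = δ_{n0}`, `Q q_0 = 0`, `Q q_{n+1} = q_n`), then
`∑_{k=0}^∞ q_k'(0) Q^k = D`: for every polynomial `p`,
`∑_{k=0}^{deg p} q_k'(0) · (Q^k p) = p'`. -/
theorem generator_eq_derivative_of_shiftInvariant {K : Type*} [Field K] [CharZero K]
    (Q : Polynomial K →ₗ[K] Polynomial K)
    (hQshift : ∀ (c : K) (p : Polynomial K), Q (shiftC c p) = shiftC c (Q p))
    (q : ℕ → Polynomial K) (hqdeg : ∀ n, (q n).degree = n)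
    (hq0 : ∀ n, (q n).eval 0 = if n = 0 then 1 else 0)
    (hQ0 : Q (q 0) = 0) (hQ : ∀ n, Q (q (n + 1)) = q n) :
    ∀ p : Polynomial K,
      ∑ k ∈ Finset.range (p.natDegree + 1),
          (Polynomial.derivative (q k)).eval 0 • ((Q ^ k) p) =
        Polynomial.derivative p := by
  -- `Q^j q_k = q_{k-j}` if `j ≤ k`, else `0`.
  have hpow : ∀ j k, (Q ^ j) (q k) = if j ≤ k then q (k - j) else 0 := by
    intro j
    induction j with
    | zero => intro k; simp
    | succ j ih =>
      intro k
      rw [pow_succ', Module.End.mul_apply, ih]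
      by_cases h : j + 1 ≤ k
      · have hj : j ≤ k := Nat.le_of_succ_le h
        rw [if_pos hj, if_pos h]
        obtain ⟨m, hm⟩ : ∃ m, k - j = m + 1 := ⟨k - (j + 1), by omega⟩
        rw [hm, hQ, show k - (j + 1) = m by omega]
      · by_cases hj : j ≤ k
        · have hjk : j = k := by omega
          subst hjk
          rw [if_pos hj, if_neg h, Nat.sub_self, hQ0]
        · rw [if_neg hj, if_neg h, map_zero]
  have hq1 : q 0 = 1 := by
    have h := Polynomial.eq_C_of_degree_le_zero (le_of_eq (by simpa using hqdeg 0))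
    have h0 := hq0 0
    rw [h] at h0 ⊢
    simp at h0
    simp [h0]
  -- span
  have hspan : ∀ n : ℕ, ∀ p : Polynomial K, p.degree ≤ (n : ℕ) →
      ∃ a : ℕ → K, p = ∑ k ∈ Finset.range (n + 1), a k • q k := by
    intro n
    induction n with
    | zero =>
      intro p hp
      refine ⟨fun _ => p.coeff 0, ?_⟩
      have hpc : p = C (p.coeff 0) := Polynomial.eq_C_of_degree_le_zero (by simpa using hp)
      rw [Finset.sum_range_one, hq1]
      conv_lhs => rw [hpc]
      rw [Polynomial.smul_eq_C_mul, mul_one]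
    | succ n ih =>
      intro p hp
      have hqne : q (n + 1) ≠ 0 :=
        Polynomial.ne_zero_of_degree_gt (n := (⊥ : WithBot ℕ))
          (by rw [hqdeg]; exact WithBot.bot_lt_coe _)
      have hqnd : (q (n + 1)).natDegree = n + 1 := by
        exact_mod_cast Polynomial.natDegree_eq_of_degree_eq_some (hqdeg (n + 1))
      have hqlc : (q (n + 1)).coeff (n + 1) ≠ 0 := by
        have hl := Polynomial.leadingCoeff_ne_zero.mpr hqne
        rwa [Polynomial.leadingCoeff, hqnd] at hl
      set c := p.coeff (n + 1) / (q (n + 1)).coeff (n + 1) with hc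
      have hr : (p - C c * q (n + 1)).degree ≤ (n : ℕ) := by
        rw [Polynomial.degree_le_iff_coeff_zero]
        intro m hm
        have hm' : n + 1 ≤ m := by exact_mod_cast hm
        rcases eq_or_lt_of_le hm' with heq | hlt
        · subst heq
          simp only [Polynomial.coeff_sub, Polynomial.coeff_C_mul, hc]
          rw [div_mul_cancel₀ _ hqlc, sub_self]
        · have h1 : p.coeff m = 0 := Polynomial.coeff_eq_zero_of_degree_lt
            (lt_of_le_of_lt hp (by exact_mod_cast hlt))
          have h2 : (q (n + 1)).coeff m = 0 := Polynomial.coeff_eq_zero_of_degree_lt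
            (by rw [hqdeg]; exact_mod_cast hlt)
          simp [h1, h2]
      obtain ⟨a, ha⟩ := ih _ hr
      refine ⟨fun k => if k = n + 1 then c else a k, ?_⟩
      rw [Finset.sum_range_succ]
      have e1 : (fun k => if k = n + 1 then c else a k) (n + 1) = c := by simp
      have hsum : ∑ x ∈ Finset.range (n + 1),
            (fun k => if k = n + 1 then c else a k) x • q x
          = ∑ k ∈ Finset.range (n + 1), a k • q k := by
        refine Finset.sum_congr rfl fun k hk => ?_
        simp only
        rw [if_neg (by have := Finset.mem_range.mp hk; omega)]
      rw [e1, hsum, ← ha, Polynomial.smul_eq_C_mul, sub_add_cancel]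
  -- expansion with coefficients (Q^k p).eval 0
  have hcoeff : ∀ (n : ℕ) (p : Polynomial K), p.degree ≤ (n : ℕ) →
      p = ∑ k ∈ Finset.range (n + 1), ((Q ^ k) p).eval 0 • q k := by
    intro n p hp
    obtain ⟨a, ha⟩ := hspan n p hp
    have heval : ∀ j, j < n + 1 → ((Q ^ j) p).eval 0 = a j := by
      intro j hj
      rw [ha, map_sum, Polynomial.eval_finset_sum]
      rw [Finset.sum_eq_single j]
      · simp [hpow, hq0]
      · intro k hk hkj
        simp only [map_smul, hpow, Polynomial.eval_smul, smul_eq_mul]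
        by_cases h : j ≤ k
        · rw [if_pos h, hq0, if_neg (by omega), mul_zero]
        · rw [if_neg h]; simp
      · intro h; exact absurd (Finset.mem_range.mpr hj) h
    calc p = ∑ k ∈ Finset.range (n + 1), a k • q k := ha
      _ = ∑ k ∈ Finset.range (n + 1), ((Q ^ k) p).eval 0 • q k := by
        refine Finset.sum_congr rfl fun k hk => ?_
        rw [heval k (Finset.mem_range.mp hk)]
  -- Q^k commutes with shifts
  have hshiftpow : ∀ (k : ℕ) (c : K) (p : Polynomial K),
      (Q ^ k) (shiftC c p) = shiftC c ((Q ^ k) p) := by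
    intro k
    induction k with
    | zero => intro c p; simp
    | succ k ih =>
      intro c p
      rw [pow_succ', Module.End.mul_apply, ih, hQshift]
      rfl
  intro p
  apply Polynomial.funext
  intro c
  set n := p.natDegree with hn
  have hdegs : (shiftC c p).degree ≤ (n : ℕ) := by
    have h1 : (shiftC c p).natDegree = n := by
      unfold shiftC
      rw [Polynomial.natDegree_comp, Polynomial.natDegree_X_add_C, mul_one]
    calc (shiftC c p).degree ≤ ((shiftC c p).natDegree : WithBot ℕ) :=
        Polynomial.degree_le_natDegree
      _ = (n : WithBot ℕ) := by rw [h1]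
  have key : p.comp (X + C c) = ∑ k ∈ Finset.range (n + 1), ((Q ^ k) p).eval c • q k := by
    have h := hcoeff n (shiftC c p) hdegs
    rw [show (shiftC c p) = p.comp (X + C c) from rfl] at h
    rw [h]
    refine Finset.sum_congr rfl fun k _ => ?_
    rw [show p.comp (X + C c) = shiftC c p from rfl, hshiftpow]
    unfold shiftC
    rw [Polynomial.eval_comp]
    simp
  have key3 := congrArg Polynomial.derivative key
  rw [Polynomial.derivative_comp] at key3
  have key4 := congrArg (Polynomial.eval 0) key3
  simp only [Polynomial.derivative_add, Polynomial.derivative_X, Polynomial.derivative_C,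
    add_zero, one_mul, Polynomial.eval_mul, Polynomial.eval_comp, Polynomial.eval_add,
    Polynomial.eval_X, Polynomial.eval_C, zero_add, map_sum, Polynomial.derivative_smul,
    Polynomial.eval_finset_sum, Polynomial.eval_smul,
    smul_eq_mul, Polynomial.eval_one] at key4
  rw [Polynomial.eval_finset_sum, key4]
  refine Finset.sum_congr rfl fun k _ => ?_
  rw [Polynomial.eval_smul, smul_eq_mul, mul_comm]
end
end

section
/- Let (p_n)_{n∈ℕ} be a sequence of polynomials in K[x] with deg p_n = n, and let F : K[x] → K[x,y] be a K-algebra homomorphism satisfying F p_n(x) = Σ_{k=0}^n p_k(x) p_{n−k}(y) for all n. Then there exists a constant c ∈ K such that F p = p(x + y − c) for every p ∈ K[x]; that is, F = E^{y−c} is substitution of x + y − c for x. Consequently the counit ε defined by ε p_n = δ_{n0} is evaluation at x = c. -/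
open Polynomial

/-- If a `K`-algebra homomorphism `F : K[x] → K[x,y]` satisfies the
convolution identity `F p_n(x) = ∑_{k=0}^n p_k(x) p_{n-k}(y)` for a polynomial sequence
`(p_n)` (`deg p_n = n`), then `F` is substitution of `x + y - c` for `x` for some constant
`c ∈ K`, and the counit `ε` (`ε p_n = δ_{n0}`) is evaluation at `x = c`.
Here `K[x,y]` is represented as `(K[x])[y]` (inner variable `x`, outer variable `y`), so
`x + y - c` is `C X + X - C (C c)`, and `p_k(x) p_{n-k}(y)` is `C (p k) * (p (n-k)).map C`. -/
theorem bialgebra_convolution_is_shift {K : Type*} [Field K] [CharZero K]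
    (p : ℕ → Polynomial K) (hpdeg : ∀ n, (p n).degree = n)
    (F : Polynomial K →ₐ[K] Polynomial (Polynomial K))
    (hF : ∀ n, F (p n) = ∑ k ∈ Finset.range (n + 1), C (p k) * (p (n - k)).map C) :
    ∃ c : K,
      (∀ pl : Polynomial K,
        F pl = Polynomial.aeval (C X + X - C (C c) : Polynomial (Polynomial K)) pl) ∧
      (∀ ε : Polynomial K →ₗ[K] K,
        (∀ n, ε (p n) = if n = 0 then 1 else 0) → ∀ pl : Polynomial K, ε pl = pl.eval c) := by
  have hpne : ∀ n, p n ≠ 0 := by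
    intro n h
    have := hpdeg n
    rw [h, degree_zero] at this
    exact (WithBot.bot_ne_coe).elim (by exact_mod_cast this)
  -- p 0 = 1
  have hp0C : p 0 = C ((p 0).coeff 0) := eq_C_of_degree_le_zero (by rw [hpdeg 0]; norm_num)
  have hp0 : p 0 = 1 := by
    set a := (p 0).coeff 0 with ha
    have hane : a ≠ 0 := by
      intro h
      apply hpne 0
      rw [hp0C, h, map_zero]
    have h0 := hF 0
    rw [Finset.sum_range_one] at h0
    rw [hp0C] at h0
    have hL : F (C a) = C (C a) := by
      rw [← Polynomial.algebraMap_eq, AlgHom.commutes]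
      simp [algebraMap_eq]
    rw [hL, map_C, ← map_mul, ← map_mul] at h0
    have : a = a * a := by
      have := C_injective (C_injective h0)
      exact this
    have : a = 1 := by
      have h2 : a * 1 = a * a := by rw [mul_one]; exact this
      exact (mul_left_cancel₀ hane h2).symm
    rw [hp0C, this, map_one]
  obtain ⟨b, d, hb, hp1⟩ : ∃ b d : K, b ≠ 0 ∧ p 1 = C b * X + C d := by
    refine ⟨(p 1).coeff 1, (p 1).coeff 0, ?_, ?_⟩
    · intro h
      have := hpdeg 1
      have h1 : (p 1).natDegree = 1 := natDegree_eq_of_degree_eq_some this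
      have := leadingCoeff_ne_zero.2 (hpne 1)
      rw [leadingCoeff, h1] at this
      exact this h
    · exact eq_X_add_C_of_degree_le_one (le_of_eq (hpdeg 1))
  set c : K := -(d / b) with hc
  -- F X
  have hFX : F X = C X + X - C (C c) := by
    have h1 := hF 1
    have hL : F (C b * X + C d) = C (C b) * F X + C (C d) := by
      rw [map_add, map_mul]
      congr 1
      · congr 1
        rw [← Polynomial.algebraMap_eq, AlgHom.commutes]; simp [algebraMap_eq]
      · rw [← Polynomial.algebraMap_eq, AlgHom.commutes]; simp [algebraMap_eq]
    have h2 : C (C b) * F X = C (C b) * (C X + X - C (C c)) := by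
      rw [show Finset.range (1+1) = {0, 1} by rfl] at h1
      rw [Finset.sum_insert (by simp), Finset.sum_singleton] at h1
      simp only [Nat.sub_self, Nat.sub_zero, hp0, map_one, Polynomial.map_one, one_mul,
        mul_one] at h1
      rw [hp1, hL] at h1
      have hmap : (C b * X + C d).map (C : K →+* Polynomial K)
          = C (C b) * X + C (C d) := by simp
      have hCp : (C (C b * X + C d) : Polynomial (Polynomial K))
          = C (C b) * C X + C (C d) := by rw [map_add, map_mul]
      rw [hmap, hCp] at h1
      have hbc : b * c = -d := by rw [hc]; field_simp
      have hprod : (C (C b) : Polynomial (Polynomial K)) * C (C c) = -C (C d) := by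
        rw [← map_mul, ← map_mul, hbc, map_neg, map_neg]
      linear_combination h1 + hprod
    have hCbne : (C (C b) : Polynomial (Polynomial K)) ≠ 0 := by
      simp [hb]
    exact mul_left_cancel₀ hCbne h2
  set t : Polynomial (Polynomial K) := C X + X - C (C c) with ht
  have hFeq : F = (aeval t : Polynomial K →ₐ[K] Polynomial (Polynomial K)) :=
    Polynomial.algHom_ext (by rw [hFX, aeval_X])
  refine ⟨c, fun pl => by rw [hFeq], ?_⟩
  -- key identity
  set ψ : Polynomial (Polynomial K) →ₐ[K] Polynomial K :=
    Polynomial.mapAlgHom (Polynomial.aeval c : Polynomial K →ₐ[K] K) with hψ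
  have hψC : ∀ q : Polynomial K, ψ (C q) = C (q.eval c) := by
    intro q; simp [hψ, mapAlgHom, aeval_def, eval, -eval₂_id]
  have hψX : ψ X = X := by simp [hψ, mapAlgHom]
  have hψmapC : ∀ q : Polynomial K, ψ (q.map C) = q := by
    intro q
    show (q.map (C : K →+* Polynomial K)).map (aeval c : Polynomial K →ₐ[K] K).toRingHom = q
    rw [map_map]
    convert Polynomial.map_id
    ext x
    simp
  have key : ∀ n, p n = ∑ k ∈ Finset.range (n + 1), C ((p k).eval c) * p (n - k) := by
    intro n
    have h1 : ψ (F (p n)) = p n := by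
      rw [hFeq]
      rw [← aeval_algHom_apply]
      have : ψ t = X := by
        rw [ht, map_sub, map_add, hψX, hψC, hψC]
        simp
      rw [this, aeval_X_left_apply]
    rw [hF n, map_sum] at h1
    conv_lhs => rw [← h1]
    refine Finset.sum_congr rfl fun k _ => ?_
    rw [map_mul, hψC, hψmapC]
  have hev : ∀ n, (p n).eval c = if n = 0 then 1 else 0 := by
    intro n
    induction n using Nat.strong_induction_on with
    | _ n ih =>
      match n with
      | 0 => simp [hp0]
      | Nat.succ m =>
        simp only [Nat.succ_ne_zero, if_false]
        have hk := key (m + 1)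
        rw [Finset.sum_range_succ'] at hk
        -- hk : p (m+1) = ∑ k ∈ range (m+1), C ((p (k+1)).eval c) * p (m+1 - (k+1)) + C ((p 0).eval c) * p (m+1)
        rw [Finset.sum_range_succ] at hk
        have hmid : ∑ k ∈ Finset.range m, C ((p (k + 1)).eval c) * p (m + 1 - (k + 1)) = 0 := by
          refine Finset.sum_eq_zero fun k hkm => ?_
          have hklt := Finset.mem_range.mp hkm
          rw [ih (k + 1) (by omega)]
          simp [Nat.succ_ne_zero]
        rw [hmid, zero_add] at hk
        simp only [hp0, eval_one, map_one, one_mul, Nat.add_sub_cancel, Nat.sub_self] at hk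
        rw [Nat.sub_zero] at hk
        have : (C ((p (m+1)).eval c) : Polynomial K) = 0 := by linear_combination -hk
        exact_mod_cast C_eq_zero.mp this
  -- ε part
  intro ε hε
  have main : ∀ n : ℕ, ∀ q : Polynomial K, q.natDegree ≤ n → ε q = q.eval c := by
    intro n
    induction n with
    | zero =>
      intro q hq
      rw [eq_C_of_natDegree_le_zero hq]
      have : (C (q.coeff 0) : Polynomial K) = q.coeff 0 • p 0 := by
        rw [hp0, smul_eq_C_mul, mul_one]
      rw [this, map_smul, hε 0]
      simp [hp0]
    | succ n ihn =>
      intro q hq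
      by_cases hqn : q.natDegree ≤ n
      · exact ihn q hqn
      have hqd : q.natDegree = n + 1 := le_antisymm hq (by omega)
      have hqne : q ≠ 0 := fun h => by simp [h] at hqd
      set l : K := q.leadingCoeff / (p (n + 1)).leadingCoeff with hl
      have hlpne : (p (n+1)).leadingCoeff ≠ 0 := leadingCoeff_ne_zero.2 (hpne (n+1))
      have hlne : l ≠ 0 := div_ne_zero (leadingCoeff_ne_zero.2 hqne) hlpne
      set r : Polynomial K := q - C l * p (n + 1) with hr
      have hdr : r.degree < (n + 1 : ℕ) := by
        have hdq : q.degree = (n + 1 : ℕ) := by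
          rw [degree_eq_natDegree hqne, hqd]
        have hdeq : q.degree = (C l * p (n + 1)).degree := by
          rw [degree_C_mul (by exact hlne), hpdeg, hdq]
        have hlc : q.leadingCoeff = (C l * p (n + 1)).leadingCoeff := by
          rw [leadingCoeff_mul, leadingCoeff_C, hl, div_mul_cancel₀ _ hlpne]
        have := degree_sub_lt hdeq hqne hlc
        rwa [← hr, hdq] at this
      have hrn : r.natDegree ≤ n := by
        by_cases hr0 : r = 0
        · simp [hr0]
        · have := (natDegree_lt_iff_degree_lt hr0).2 hdr
          omega
      have hq' : q = r + l • p (n + 1) := by rw [smul_eq_C_mul, hr]; ring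
      rw [hq', map_add, map_smul, hε (n+1)]
      simp only [Nat.succ_ne_zero, if_false, smul_zero, mul_zero, add_zero]
      rw [ihn r hrn, eval_add, eval_smul, hev (n+1)]
      simp
  intro pl
  exact main pl.natDegree pl le_rfl
end
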